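/- arXiv:math/0512308 — 8 statements merged into one kernel-verified Lean document; each statement's English description precedes it below -/
import Mathlib

section
/- Let c ∈ {−1, 1}, let I, J ⊆ ℝ be open intervals, D = I × J, and let f : I → ℝ and g : J → ℝ be smooth with f(u) + g(v) nowhere zero and (1 + c f(u)²)(1 + c g(v)²) > 0 on D. Let ω, Q, R : D → ℝ be smooth, set H_c(u,v) = (1 − c f(u) g(v))/(f(u) + g(v)), H₀(u,v) = 1/(f(u) + g(v)), ω̃ = ω + log((1 + c f²)(1 + c g²)), Q̃ = (1 + c f²) Q, R̃ = (1 + c g²) R. Then (ω, Q, R, H_c) satisfies the Gauss equation (G_c) and the Codazzi equations (C_c) on D if and only if (ω̃, Q̃, R̃, H₀) satisfies (G₀) and (C₀) on D. -/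
open Matrix

noncomputable section

/-- Partial derivative in the first variable. -/
def pd1 (f : ℝ → ℝ → ℝ) (u v : ℝ) : ℝ := deriv (fun x => f x v) u

/-- Partial derivative in the second variable. -/
def pd2 (f : ℝ → ℝ → ℝ) (u v : ℝ) : ℝ := deriv (fun y => f u y) v

/-- The Gauss equation (G_c) at a point:
`ω_uv + (1/2)(H² + c)e^ω − 2QRe^{−ω} = 0`. -/
def GaussEq (c : ℝ) (ω Q R H : ℝ → ℝ → ℝ) (u v : ℝ) : Prop :=
  pd2 (pd1 ω) u v + (1 / 2) * ((H u v) ^ 2 + c) * Real.exp (ω u v)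
    - 2 * Q u v * R u v * Real.exp (-ω u v) = 0

/-- The Codazzi equations (C_c) at a point:
`H_u = 2e^{−ω}Q_v` and `H_v = 2e^{−ω}R_u`. -/
def CodazziEq (ω Q R H : ℝ → ℝ → ℝ) (u v : ℝ) : Prop :=
  pd1 H u v = 2 * Real.exp (-ω u v) * pd2 Q u v ∧
  pd2 H u v = 2 * Real.exp (-ω u v) * pd1 R u v

/-- Smoothness of a two-variable function on a set. -/
def Smooth2 (f : ℝ → ℝ → ℝ) (s : Set (ℝ × ℝ)) : Prop :=
  ContDiffOn ℝ (⊤ : ℕ∞) (fun p : ℝ × ℝ => f p.1 p.2) s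

/-!
With `k = (1 + c f²)(1 + c g²)`, the identity `(1 - c p q)² + c (p + q)² = (1 + c p²)(1 + c q²)`
gives `H_c² + c = k H₀²`, which matches the zeroth-order terms of (G_c) and (G₀) since
`e^ω̃ = k e^ω`. As `Real.log` is `log |·|`, `log k` is a function of `u` plus a function of `v`
even when both factors are negative, so `ω̃_uv = ω_uv`. Finally `∂_u H_c = (1 + c g²) ∂_u H₀`
and `∂_v H_c = (1 + c f²) ∂_v H₀`, so the Codazzi equations of the two systems differ by
nonzero factors.
-/

open Filter Topology

lemma Smooth2.differentiableAt_fst {F : ℝ → ℝ → ℝ} {s : Set (ℝ × ℝ)} (hF : Smooth2 F s)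
    (hs : IsOpen s) {u v : ℝ} (huv : (u, v) ∈ s) : DifferentiableAt ℝ (fun x => F x v) u := by
  have hF' := (hF.contDiffAt (hs.mem_nhds huv)).differentiableAt (by simp)
  exact hF'.comp u ((differentiableAt_id (𝕜 := ℝ) (x := u)).prodMk (differentiableAt_const v))

lemma pd1_const_mul (a : ℝ → ℝ) (F : ℝ → ℝ → ℝ) (u v : ℝ) :
    pd1 (fun u v => a v * F u v) u v = a v * pd1 F u v :=
  deriv_const_mul_field _

lemma pd2_const_mul (a : ℝ → ℝ) (F : ℝ → ℝ → ℝ) (u v : ℝ) :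
    pd2 (fun u v => a u * F u v) u v = a u * pd2 F u v :=
  deriv_const_mul_field _

lemma pd2_pd1_eq_of_eq_add_add {F G : ℝ → ℝ → ℝ} {a b : ℝ → ℝ} {U V : Set ℝ} {u v : ℝ}
    (hU : IsOpen U) (hV : IsOpen V) (hu : u ∈ U) (hv : v ∈ V)
    (hG : ∀ x ∈ U, ∀ y ∈ V, G x y = F x y + a x + b y)
    (hF : ∀ y ∈ V, DifferentiableAt ℝ (fun x => F x y) u) (ha : DifferentiableAt ℝ a u) :
    pd2 (pd1 G) u v = pd2 (pd1 F) u v := by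
  have hpd1 : ∀ y ∈ V, pd1 G u y = pd1 F u y + deriv a u := by
    intro y hy
    have hev : (fun x => G x y) =ᶠ[𝓝 u] fun x => F x y + a x + b y :=
      eventually_of_mem (hU.mem_nhds hu) fun x hx => hG x hx y hy
    rw [pd1, hev.deriv_eq, deriv_add_const, deriv_fun_add (hF y hy) ha, pd1]
  have hev : (fun y => pd1 G u y) =ᶠ[𝓝 v] fun y => pd1 F u y + deriv a u :=
    eventually_of_mem (hV.mem_nhds hv) hpd1
  rw [pd2, hev.deriv_eq, deriv_add_const, pd2]

lemma sq_div_add_add_const (c p q : ℝ) (hpq : p + q ≠ 0) :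
    ((1 - c * p * q) / (p + q)) ^ 2 + c
      = (1 + c * p ^ 2) * (1 + c * q ^ 2) * (1 / (p + q)) ^ 2 := by
  field_simp
  ring

section MeanCurvature

variable {f g : ℝ → ℝ} {u v : ℝ}

lemma pd1_meanCurvature (c : ℝ) (hf : DifferentiableAt ℝ f u) (hfg : f u + g v ≠ 0) :
    pd1 (fun u v => (1 - c * f u * g v) / (f u + g v)) u v
      = (1 + c * g v ^ 2) * pd1 (fun u v => 1 / (f u + g v)) u v := by
  have hden := hf.hasDerivAt.add_const (g v)
  have hHc := ((hasDerivAt_const u 1).fun_sub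
    ((hf.hasDerivAt.const_mul c).mul_const (g v))).fun_div hden hfg
  have hH₀ := (hasDerivAt_const u (1 : ℝ)).fun_div hden hfg
  rw [pd1, pd1, hHc.deriv, hH₀.deriv]
  field_simp
  ring

lemma pd2_meanCurvature (c : ℝ) (hg : DifferentiableAt ℝ g v) (hfg : f u + g v ≠ 0) :
    pd2 (fun u v => (1 - c * f u * g v) / (f u + g v)) u v
      = (1 + c * f u ^ 2) * pd2 (fun u v => 1 / (f u + g v)) u v := by
  have hden := hg.hasDerivAt.const_add (f u)
  have hHc := ((hasDerivAt_const v 1).fun_sub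
    (hg.hasDerivAt.const_mul (c * f u))).fun_div hden hfg
  have hH₀ := (hasDerivAt_const v (1 : ℝ)).fun_div hden hfg
  rw [pd2, pd2, hHc.deriv, hH₀.deriv]
  field_simp
  ring

end MeanCurvature

lemma exp_add_log {x k : ℝ} (hk : 0 < k) : Real.exp (x + Real.log k) = Real.exp x * k := by
  rw [Real.exp_add, Real.exp_log hk]

lemma exp_neg_add_log {x k : ℝ} (hk : 0 < k) :
    Real.exp (-(x + Real.log k)) = Real.exp (-x) / k := by
  rw [neg_add, Real.exp_add, Real.exp_neg (Real.log k), Real.exp_log hk, div_eq_mul_inv]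

section Lawson

variable {c : ℝ} {f g : ℝ → ℝ} {ω Q R : ℝ → ℝ → ℝ} {u v : ℝ}

theorem gaussEq_iff_gaussEq_zero {I J : Set ℝ} (hI : IsOpen I) (hJ : IsOpen J)
    (hu : u ∈ I) (hv : v ∈ J) (hf : DifferentiableAt ℝ f u)
    (hω : ∀ y ∈ J, DifferentiableAt ℝ (fun x => ω x y) u) (hfg : f u + g v ≠ 0)
    (hpos : ∀ u ∈ I, ∀ v ∈ J, 0 < (1 + c * f u ^ 2) * (1 + c * g v ^ 2)) :
    GaussEq c ω Q R (fun u v => (1 - c * f u * g v) / (f u + g v)) u v ↔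
      GaussEq 0 (fun u v => ω u v + Real.log ((1 + c * f u ^ 2) * (1 + c * g v ^ 2)))
        (fun u v => (1 + c * f u ^ 2) * Q u v) (fun u v => (1 + c * g v ^ 2) * R u v)
        (fun u v => 1 / (f u + g v)) u v := by
  have hk := hpos u hu v hv
  obtain ⟨hfu, hgv⟩ := mul_ne_zero_iff.mp hk.ne'
  have hlog : ∀ x ∈ I, ∀ y ∈ J, ω x y + Real.log ((1 + c * f x ^ 2) * (1 + c * g y ^ 2))
      = ω x y + Real.log (1 + c * f x ^ 2) + Real.log (1 + c * g y ^ 2) := by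
    intro x hx y hy
    obtain ⟨hfx, hgy⟩ := mul_ne_zero_iff.mp (hpos x hx y hy).ne'
    rw [Real.log_mul hfx hgy, add_assoc]
  have hmixed := pd2_pd1_eq_of_eq_add_add hI hJ hu hv hlog hω
    (((hf.pow 2).const_mul c).const_add 1 |>.log hfu)
  unfold GaussEq
  rw [hmixed, exp_add_log hk, exp_neg_add_log hk, sq_div_add_add_const c _ _ hfg]
  refine Iff.of_eq (congrArg (· = 0) ?_)
  field_simp
  ring

theorem codazziEq_iff_codazziEq_zero (hf : DifferentiableAt ℝ f u)
    (hg : DifferentiableAt ℝ g v) (hfg : f u + g v ≠ 0)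
    (hk : 0 < (1 + c * f u ^ 2) * (1 + c * g v ^ 2)) :
    CodazziEq ω Q R (fun u v => (1 - c * f u * g v) / (f u + g v)) u v ↔
      CodazziEq (fun u v => ω u v + Real.log ((1 + c * f u ^ 2) * (1 + c * g v ^ 2)))
        (fun u v => (1 + c * f u ^ 2) * Q u v) (fun u v => (1 + c * g v ^ 2) * R u v)
        (fun u v => 1 / (f u + g v)) u v := by
  obtain ⟨hfu, hgv⟩ := mul_ne_zero_iff.mp hk.ne'
  unfold CodazziEq
  rw [pd1_meanCurvature c hf hfg, pd2_meanCurvature c hg hfg, pd2_const_mul, pd1_const_mul,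
    exp_neg_add_log hk]
  refine and_congr ?_ ?_
  · conv_rhs => rw [← mul_right_inj' hgv]
    refine Iff.of_eq (congrArg _ ?_)
    field_simp
  · conv_rhs => rw [← mul_right_inj' hfu]
    refine Iff.of_eq (congrArg _ ?_)
    field_simp

end Lawson

theorem statement0_general
    (c : ℝ)
    (I J : Set ℝ) (hIopen : IsOpen I)
    (hJopen : IsOpen J)
    (f g : ℝ → ℝ)
    (hf : ContDiffOn ℝ (⊤ : ℕ∞) f I) (hg : ContDiffOn ℝ (⊤ : ℕ∞) g J)
    (hfg : ∀ u ∈ I, ∀ v ∈ J, f u + g v ≠ 0)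
    (hpos : ∀ u ∈ I, ∀ v ∈ J, 0 < (1 + c * f u ^ 2) * (1 + c * g v ^ 2))
    (ω Q R : ℝ → ℝ → ℝ)
    (hω : Smooth2 ω (I ×ˢ J)) :
    (∀ u ∈ I, ∀ v ∈ J,
        GaussEq c ω Q R (fun u v => (1 - c * f u * g v) / (f u + g v)) u v ∧
        CodazziEq ω Q R (fun u v => (1 - c * f u * g v) / (f u + g v)) u v) ↔
    (∀ u ∈ I, ∀ v ∈ J,
        GaussEq 0 (fun u v => ω u v + Real.log ((1 + c * f u ^ 2) * (1 + c * g v ^ 2)))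
          (fun u v => (1 + c * f u ^ 2) * Q u v)
          (fun u v => (1 + c * g v ^ 2) * R u v)
          (fun u v => 1 / (f u + g v)) u v ∧
        CodazziEq (fun u v => ω u v + Real.log ((1 + c * f u ^ 2) * (1 + c * g v ^ 2)))
          (fun u v => (1 + c * f u ^ 2) * Q u v)
          (fun u v => (1 + c * g v ^ 2) * R u v)
          (fun u v => 1 / (f u + g v)) u v) := by
  refine forall₂_congr fun u hu => forall₂_congr fun v hv => ?_
  have hfu : DifferentiableAt ℝ f u :=
    (hf.differentiableOn (by simp)).differentiableAt (hIopen.mem_nhds hu)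
  have hgv : DifferentiableAt ℝ g v :=
    (hg.differentiableOn (by simp)).differentiableAt (hJopen.mem_nhds hv)
  have hωu : ∀ y ∈ J, DifferentiableAt ℝ (fun x => ω x y) u :=
    fun y hy => hω.differentiableAt_fst (hIopen.prod hJopen) ⟨hu, hy⟩
  exact and_congr
    (gaussEq_iff_gaussEq_zero hIopen hJopen hu hv hfu hωu (hfg u hu v hv) hpos)
    (codazziEq_iff_codazziEq_zero hfu hgv (hfg u hu v hv) (hpos u hu v hv))

/-- generalized Lawson correspondence, Theorem 6.4:
`(ω, Q, R, H_c)` satisfies (G_c) and (C_c) on `D = I × J` iff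
`(ω̃, Q̃, R̃, H₀)` satisfies (G₀) and (C₀) on `D`, where
`H_c = (1 − cfg)/(f + g)`, `H₀ = 1/(f + g)`,
`ω̃ = ω + log((1 + cf²)(1 + cg²))`, `Q̃ = (1 + cf²)Q`, `R̃ = (1 + cg²)R`. -/
theorem statement0
    (c : ℝ) (hc : c = -1 ∨ c = 1)
    (I J : Set ℝ) (hIopen : IsOpen I) (hIint : I.OrdConnected)
    (hJopen : IsOpen J) (hJint : J.OrdConnected)
    (f g : ℝ → ℝ)
    (hf : ContDiffOn ℝ (⊤ : ℕ∞) f I) (hg : ContDiffOn ℝ (⊤ : ℕ∞) g J)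
    (hfg : ∀ u ∈ I, ∀ v ∈ J, f u + g v ≠ 0)
    (hpos : ∀ u ∈ I, ∀ v ∈ J, 0 < (1 + c * f u ^ 2) * (1 + c * g v ^ 2))
    (ω Q R : ℝ → ℝ → ℝ)
    (hω : Smooth2 ω (I ×ˢ J)) (hQ : Smooth2 Q (I ×ˢ J)) (hR : Smooth2 R (I ×ˢ J)) :
    (∀ u ∈ I, ∀ v ∈ J,
        GaussEq c ω Q R (fun u v => (1 - c * f u * g v) / (f u + g v)) u v ∧
        CodazziEq ω Q R (fun u v => (1 - c * f u * g v) / (f u + g v)) u v) ↔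
    (∀ u ∈ I, ∀ v ∈ J,
        GaussEq 0 (fun u v => ω u v + Real.log ((1 + c * f u ^ 2) * (1 + c * g v ^ 2)))
          (fun u v => (1 + c * f u ^ 2) * Q u v)
          (fun u v => (1 + c * g v ^ 2) * R u v)
          (fun u v => 1 / (f u + g v)) u v ∧
        CodazziEq (fun u v => ω u v + Real.log ((1 + c * f u ^ 2) * (1 + c * g v ^ 2)))
          (fun u v => (1 + c * f u ^ 2) * Q u v)
          (fun u v => (1 + c * g v ^ 2) * R u v)
          (fun u v => 1 / (f u + g v)) u v) :=
  statement0_general c I J hIopen hJopen f g hf hg hfg hpos ω Q R hω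
end
end

section
/- Let I, J ⊆ ℝ be open intervals, D = I × J, and let f : I → ℝ and g : J → ℝ be smooth with f + g nowhere zero on D; set H(u,v) = 1/(f(u) + g(v)). Let τ ∈ ℝ be such that 1 + 2τf(u) ≠ 0 and 1 − 2τg(v) ≠ 0 on D, and set λ(u,v) = (1 − 2τg(v))/(1 + 2τf(u)). Suppose smooth ω, Q, R : D → ℝ satisfy the Gauss equation (G₀) and the Codazzi equations (C₀) with mean curvature H. Then the 2×2 real matrix-valued functions U_λ = [[−ω_u/4, −Q e^{−ω/2}], [(H/2) λ e^{ω/2}, ω_u/4]] and V_λ = [[ω_v/4, −(H/2) λ^{−1} e^{ω/2}], [R e^{−ω/2}, −ω_v/4]] satisfy the zero curvature equation ∂_u V_λ − ∂_v U_λ + (U_λ V_λ − V_λ U_λ) = 0 on D. -/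
/-!
Only the products `Hλ` and `Hλ⁻¹` enter `U_λ` and `V_λ`. For a general pair of this shape the
zero curvature expression has diagonal entries `±(G₀)/2` (using `λλ⁻¹ = 1`) and off-diagonal
entries `e^{ω/2}(e^{-ω}Q_v - ∂_u(Hλ⁻¹)/2)` and `e^{ω/2}(e^{-ω}R_u - ∂_v(Hλ)/2)`.
For `H = 1/(f+g)` and `λ = (1-2τg)/(1+2τf)` one has `Hλ⁻¹ = H + 2τ/(1-2τg)` and
`Hλ = H - 2τ/(1+2τf)`, so `∂_u(Hλ⁻¹) = H_u` and `∂_v(Hλ) = H_v`, and the off-diagonal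
entries are exactly the Codazzi equations (C₀).
-/

open Matrix

noncomputable section

/-- Entrywise derivative of a matrix-valued function of a real variable. -/
def mderiv (f : ℝ → Matrix (Fin 2) (Fin 2) ℝ) (x : ℝ) : Matrix (Fin 2) (Fin 2) ℝ :=
  Matrix.of fun i j => deriv (fun t => f t i j) x

/-- The matrix `U_λ` of the Lax pair with variable spectral parameter. -/
def Umat (ω Q H lam : ℝ → ℝ → ℝ) (u v : ℝ) : Matrix (Fin 2) (Fin 2) ℝ :=
  !![-(pd1 ω u v) / 4, -(Q u v) * Real.exp (-(ω u v) / 2);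
     (H u v / 2) * lam u v * Real.exp (ω u v / 2), (pd1 ω u v) / 4]

/-- The matrix `V_λ` of the Lax pair with variable spectral parameter. -/
def Vmat (ω R H lam : ℝ → ℝ → ℝ) (u v : ℝ) : Matrix (Fin 2) (Fin 2) ℝ :=
  !![(pd2 ω u v) / 4, -(H u v / 2) * (lam u v)⁻¹ * Real.exp (ω u v / 2);
     R u v * Real.exp (-(ω u v) / 2), -(pd2 ω u v) / 4]

open Topology

lemma DifferentiableAt.hasDerivAt_comp_prodMk_fst {E : Type*} [NormedAddCommGroup E]
    [NormedSpace ℝ E] {φ : ℝ × ℝ → E} {u v : ℝ} (h : DifferentiableAt ℝ φ (u, v)) :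
    HasDerivAt (fun x => φ (x, v)) (fderiv ℝ φ (u, v) (1, 0)) u :=
  h.hasFDerivAt.comp_hasDerivAt u ((hasDerivAt_id u).prodMk (hasDerivAt_const u v))

lemma DifferentiableAt.hasDerivAt_comp_prodMk_snd {E : Type*} [NormedAddCommGroup E]
    [NormedSpace ℝ E] {φ : ℝ × ℝ → E} {u v : ℝ} (h : DifferentiableAt ℝ φ (u, v)) :
    HasDerivAt (fun y => φ (u, y)) (fderiv ℝ φ (u, v) (0, 1)) v :=
  h.hasFDerivAt.comp_hasDerivAt v ((hasDerivAt_const v u).prodMk (hasDerivAt_id v))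

namespace Smooth2

variable {F : ℝ → ℝ → ℝ} {s : Set (ℝ × ℝ)} {u v : ℝ}

lemma contDiffAt (hs : IsOpen s) (hF : Smooth2 F s) (hp : (u, v) ∈ s) :
    ContDiffAt ℝ (⊤ : ℕ∞) (Function.uncurry F) (u, v) :=
  ContDiffOn.contDiffAt hF (hs.mem_nhds hp)

lemma hasDerivAt_fst_fderiv (hs : IsOpen s) (hF : Smooth2 F s) (hp : (u, v) ∈ s) :
    HasDerivAt (fun x => F x v) (fderiv ℝ (Function.uncurry F) (u, v) (1, 0)) u :=
  ((hF.contDiffAt hs hp).differentiableAt (by simp)).hasDerivAt_comp_prodMk_fst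

lemma hasDerivAt_snd_fderiv (hs : IsOpen s) (hF : Smooth2 F s) (hp : (u, v) ∈ s) :
    HasDerivAt (fun y => F u y) (fderiv ℝ (Function.uncurry F) (u, v) (0, 1)) v :=
  ((hF.contDiffAt hs hp).differentiableAt (by simp)).hasDerivAt_comp_prodMk_snd

lemma hasDerivAt_pd1 (hs : IsOpen s) (hF : Smooth2 F s) (hp : (u, v) ∈ s) :
    HasDerivAt (fun x => F x v) (pd1 F u v) u := by
  have h := hF.hasDerivAt_fst_fderiv hs hp
  rwa [pd1, h.deriv]

lemma hasDerivAt_pd2 (hs : IsOpen s) (hF : Smooth2 F s) (hp : (u, v) ∈ s) :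
    HasDerivAt (fun y => F u y) (pd2 F u v) v := by
  have h := hF.hasDerivAt_snd_fderiv hs hp
  rwa [pd2, h.deriv]

lemma differentiableAt_fderiv (hs : IsOpen s) (hF : Smooth2 F s) (hp : (u, v) ∈ s) :
    DifferentiableAt ℝ (fderiv ℝ (Function.uncurry F)) (u, v) :=
  ((hF.contDiffAt hs hp).fderiv_right (m := 1) (WithTop.coe_le_coe.mpr le_top)).differentiableAt
    one_ne_zero

lemma hasDerivAt_pd1_snd_fderiv (hs : IsOpen s) (hF : Smooth2 F s) (hp : (u, v) ∈ s) :
    HasDerivAt (fun y => pd1 F u y)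
      (fderiv ℝ (fderiv ℝ (Function.uncurry F)) (u, v) (0, 1) (1, 0)) v := by
  refine ((hF.differentiableAt_fderiv hs hp).hasDerivAt_comp_prodMk_snd.clm_apply
    (hasDerivAt_const v ((1 : ℝ), (0 : ℝ)))).congr_deriv (by simp) |>.congr_of_eventuallyEq ?_
  filter_upwards [(continuous_const.prodMk continuous_id).continuousAt.preimage_mem_nhds
    (hs.mem_nhds hp)] with y hy
  exact (hF.hasDerivAt_fst_fderiv hs hy).deriv

lemma hasDerivAt_pd2_fst_fderiv (hs : IsOpen s) (hF : Smooth2 F s) (hp : (u, v) ∈ s) :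
    HasDerivAt (fun x => pd2 F x v)
      (fderiv ℝ (fderiv ℝ (Function.uncurry F)) (u, v) (1, 0) (0, 1)) u := by
  refine ((hF.differentiableAt_fderiv hs hp).hasDerivAt_comp_prodMk_fst.clm_apply
    (hasDerivAt_const u ((0 : ℝ), (1 : ℝ)))).congr_deriv (by simp) |>.congr_of_eventuallyEq ?_
  filter_upwards [(continuous_id.prodMk continuous_const).continuousAt.preimage_mem_nhds
    (hs.mem_nhds hp)] with x hx
  exact (hF.hasDerivAt_snd_fderiv hs hx).deriv

lemma hasDerivAt_pd1_snd (hs : IsOpen s) (hF : Smooth2 F s) (hp : (u, v) ∈ s) :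
    HasDerivAt (fun y => pd1 F u y) (pd2 (pd1 F) u v) v := by
  have h := hF.hasDerivAt_pd1_snd_fderiv hs hp
  rwa [pd2, h.deriv]

lemma hasDerivAt_pd2_fst (hs : IsOpen s) (hF : Smooth2 F s) (hp : (u, v) ∈ s) :
    HasDerivAt (fun x => pd2 F x v) (pd2 (pd1 F) u v) u := by
  have hsymm : IsSymmSndFDerivAt ℝ (Function.uncurry F) (u, v) :=
    (hF.contDiffAt hs hp).isSymmSndFDerivAt
      (by rw [minSmoothness_of_isRCLikeNormedField]; exact WithTop.coe_le_coe.mpr le_top)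
  have h := hF.hasDerivAt_pd2_fst_fderiv hs hp
  rwa [hsymm, ← (hF.hasDerivAt_pd1_snd_fderiv hs hp).deriv] at h

end Smooth2

lemma mderiv_Vmat_sub_mderiv_Umat_add_commutator {ω Q R H lam : ℝ → ℝ → ℝ} {u v a' b' : ℝ}
    (hω_u : HasDerivAt (fun x => ω x v) (pd1 ω u v) u)
    (hω_v : HasDerivAt (fun y => ω u y) (pd2 ω u v) v)
    (hω_uv : HasDerivAt (fun y => pd1 ω u y) (pd2 (pd1 ω) u v) v)
    (hω_vu : HasDerivAt (fun x => pd2 ω x v) (pd2 (pd1 ω) u v) u)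
    (hQ_v : HasDerivAt (fun y => Q u y) (pd2 Q u v) v)
    (hR_u : HasDerivAt (fun x => R x v) (pd1 R u v) u)
    (ha : HasDerivAt (fun y => H u y * lam u y) a' v)
    (hb : HasDerivAt (fun x => H x v * (lam x v)⁻¹) b' u)
    (hlam : lam u v ≠ 0) :
    mderiv (fun x => Vmat ω R H lam x v) u - mderiv (fun y => Umat ω Q H lam u y) v +
        (Umat ω Q H lam u v * Vmat ω R H lam u v - Vmat ω R H lam u v * Umat ω Q H lam u v) =
      !![(pd2 (pd1 ω) u v + 1 / 2 * H u v ^ 2 * Real.exp (ω u v)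
            - 2 * Q u v * R u v * Real.exp (-ω u v)) / 2,
          Real.exp (ω u v / 2) * (Real.exp (-ω u v) * pd2 Q u v - b' / 2);
        Real.exp (ω u v / 2) * (Real.exp (-ω u v) * pd1 R u v - a' / 2),
          -(pd2 (pd1 ω) u v + 1 / 2 * H u v ^ 2 * Real.exp (ω u v)
            - 2 * Q u v * R u v * Real.exp (-ω u v)) / 2] := by
  have hV01 : HasDerivAt (fun x => -(H x v / 2) * (lam x v)⁻¹ * Real.exp (ω x v / 2))
      (-(b' / 2) * Real.exp (ω u v / 2) +
        -(H u v * (lam u v)⁻¹ / 2) * (Real.exp (ω u v / 2) * (pd1 ω u v / 2))) u :=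
    ((hb.div_const 2).neg.mul (hω_u.div_const 2).exp).congr_of_eventuallyEq
      (.of_forall fun x => by simp only [Pi.mul_apply, Pi.neg_apply]; ring)
  have hU10 : HasDerivAt (fun y => H u y / 2 * lam u y * Real.exp (ω u y / 2))
      (a' / 2 * Real.exp (ω u v / 2) +
        H u v * lam u v / 2 * (Real.exp (ω u v / 2) * (pd2 ω u v / 2))) v :=
    ((ha.div_const 2).mul (hω_v.div_const 2).exp).congr_of_eventuallyEq
      (.of_forall fun y => by simp only [Pi.mul_apply]; ring)
  have hV00 : HasDerivAt (fun x => pd2 ω x v / 4) (pd2 (pd1 ω) u v / 4) u := hω_vu.div_const 4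
  have hV11 : HasDerivAt (fun x => -pd2 ω x v / 4) (-pd2 (pd1 ω) u v / 4) u :=
    hω_vu.neg.div_const 4
  have hU00 : HasDerivAt (fun y => -pd1 ω u y / 4) (-pd2 (pd1 ω) u v / 4) v :=
    hω_uv.neg.div_const 4
  have hU11 : HasDerivAt (fun y => pd1 ω u y / 4) (pd2 (pd1 ω) u v / 4) v := hω_uv.div_const 4
  have hV10 : HasDerivAt (fun x => R x v * Real.exp (-ω x v / 2))
      (pd1 R u v * Real.exp (-ω u v / 2) + R u v * (Real.exp (-ω u v / 2) * (-pd1 ω u v / 2))) u :=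
    hR_u.mul (hω_u.neg.div_const 2).exp
  have hU01 : HasDerivAt (fun y => -Q u y * Real.exp (-ω u y / 2))
      (-pd2 Q u v * Real.exp (-ω u v / 2) +
        -Q u v * (Real.exp (-ω u v / 2) * (-pd2 ω u v / 2))) v :=
    hQ_v.neg.mul (hω_v.neg.div_const 2).exp
  have hE : Real.exp (ω u v) = Real.exp (ω u v / 2) ^ 2 := by
    rw [← Real.exp_nat_mul]; ring_nf
  have hE_neg_half : Real.exp (-ω u v / 2) = (Real.exp (ω u v / 2))⁻¹ := by
    rw [neg_div, Real.exp_neg]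
  have hE_neg : Real.exp (-ω u v) = (Real.exp (ω u v / 2) ^ 2)⁻¹ := by
    rw [Real.exp_neg, hE]
  ext i j
  fin_cases i <;> fin_cases j <;>
    simp only [mderiv, Umat, Vmat, Matrix.sub_apply, Matrix.add_apply, Matrix.mul_apply,
      Fin.sum_univ_two, Matrix.of_apply, Matrix.cons_val', Matrix.cons_val_zero,
      Matrix.cons_val_one, Matrix.empty_val', Matrix.cons_val_fin_one, Fin.mk_zero, Fin.mk_one,
      Fin.isValue]
  all_goals
    simp only [hV00.deriv, hV01.deriv, hV10.deriv, hV11.deriv, hU00.deriv, hU01.deriv,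
      hU10.deriv, hU11.deriv, hE, hE_neg, hE_neg_half]
    field_simp
    ring

section HarmonicInverseMeanCurvature

variable {f g : ℝ → ℝ} {τ u v : ℝ} {H lam : ℝ → ℝ → ℝ}

lemma hasDerivAt_fst_of_eq_one_div_add (hH : ∀ u v, H u v = 1 / (f u + g v))
    (hf : DifferentiableAt ℝ f u) (hfg : f u + g v ≠ 0) :
    HasDerivAt (fun x => H x v) (pd1 H u v) u := by
  have : DifferentiableAt ℝ (fun x => H x v) u := by
    simp only [hH, one_div]
    exact (hf.add_const _).inv hfg
  exact this.hasDerivAt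

lemma hasDerivAt_snd_of_eq_one_div_add (hH : ∀ u v, H u v = 1 / (f u + g v))
    (hg : DifferentiableAt ℝ g v) (hfg : f u + g v ≠ 0) :
    HasDerivAt (fun y => H u y) (pd2 H u v) v := by
  have : DifferentiableAt ℝ (fun y => H u y) v := by
    simp only [hH, one_div]
    exact (hg.const_add _).inv hfg
  exact this.hasDerivAt

lemma hasDerivAt_mul_inv_lam (hH : ∀ u v, H u v = 1 / (f u + g v))
    (hlam : ∀ u v, lam u v = (1 - 2 * τ * g v) / (1 + 2 * τ * f u))
    (hf : DifferentiableAt ℝ f u) (hfg : f u + g v ≠ 0) (hτg : 1 - 2 * τ * g v ≠ 0) :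
    HasDerivAt (fun x => H x v * (lam x v)⁻¹) (pd1 H u v) u := by
  refine ((hasDerivAt_fst_of_eq_one_div_add hH hf hfg).add_const
    (2 * τ / (1 - 2 * τ * g v))).congr_of_eventuallyEq ?_
  filter_upwards [(hf.add_const (g v)).continuousAt.eventually_ne hfg] with x hx
  rw [hH, hlam, inv_div, div_add_div _ _ hx hτg]
  field_simp
  ring

lemma hasDerivAt_mul_lam (hH : ∀ u v, H u v = 1 / (f u + g v))
    (hlam : ∀ u v, lam u v = (1 - 2 * τ * g v) / (1 + 2 * τ * f u))
    (hg : DifferentiableAt ℝ g v) (hfg : f u + g v ≠ 0) (hτf : 1 + 2 * τ * f u ≠ 0) :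
    HasDerivAt (fun y => H u y * lam u y) (pd2 H u v) v := by
  refine ((hasDerivAt_snd_of_eq_one_div_add hH hg hfg).sub_const
    (2 * τ / (1 + 2 * τ * f u))).congr_of_eventuallyEq ?_
  filter_upwards [(hg.const_add (f u)).continuousAt.eventually_ne hfg] with y hy
  rw [hH, hlam, div_sub_div _ _ hy hτf]
  field_simp
  ring

end HarmonicInverseMeanCurvature

theorem statement1_general
    (I J : Set ℝ) (hIopen : IsOpen I)
    (hJopen : IsOpen J)
    (f g : ℝ → ℝ)
    (hf : ContDiffOn ℝ (⊤ : ℕ∞) f I) (hg : ContDiffOn ℝ (⊤ : ℕ∞) g J)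
    (hfg : ∀ u ∈ I, ∀ v ∈ J, f u + g v ≠ 0)
    (τ : ℝ)
    (hτf : ∀ u ∈ I, 1 + 2 * τ * f u ≠ 0)
    (hτg : ∀ v ∈ J, 1 - 2 * τ * g v ≠ 0)
    (H lam : ℝ → ℝ → ℝ)
    (hH : ∀ u v, H u v = 1 / (f u + g v))
    (hlam : ∀ u v, lam u v = (1 - 2 * τ * g v) / (1 + 2 * τ * f u))
    (ω Q R : ℝ → ℝ → ℝ)
    (hω : Smooth2 ω (I ×ˢ J)) (hQ : Smooth2 Q (I ×ˢ J)) (hR : Smooth2 R (I ×ˢ J))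
    (hGauss : ∀ u ∈ I, ∀ v ∈ J, GaussEq 0 ω Q R H u v)
    (hCodazzi : ∀ u ∈ I, ∀ v ∈ J, CodazziEq ω Q R H u v) :
    ∀ u ∈ I, ∀ v ∈ J,
      mderiv (fun x => Vmat ω R H lam x v) u - mderiv (fun y => Umat ω Q H lam u y) v +
        (Umat ω Q H lam u v * Vmat ω R H lam u v - Vmat ω R H lam u v * Umat ω Q H lam u v)
        = 0 := by
  intro u hu v hv
  have hs : IsOpen (I ×ˢ J) := hIopen.prod hJopen
  have hp : (u, v) ∈ I ×ˢ J := ⟨hu, hv⟩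
  have hfu : DifferentiableAt ℝ f u :=
    (hf.contDiffAt (hIopen.mem_nhds hu)).differentiableAt (by simp)
  have hgv : DifferentiableAt ℝ g v :=
    (hg.contDiffAt (hJopen.mem_nhds hv)).differentiableAt (by simp)
  have hlam0 : lam u v ≠ 0 := by
    rw [hlam]; exact div_ne_zero (hτg v hv) (hτf u hu)
  rw [mderiv_Vmat_sub_mderiv_Umat_add_commutator (hω.hasDerivAt_pd1 hs hp)
    (hω.hasDerivAt_pd2 hs hp) (hω.hasDerivAt_pd1_snd hs hp) (hω.hasDerivAt_pd2_fst hs hp)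
    (hQ.hasDerivAt_pd2 hs hp) (hR.hasDerivAt_pd1 hs hp)
    (hasDerivAt_mul_lam hH hlam hgv (hfg u hu v hv) (hτf u hu))
    (hasDerivAt_mul_inv_lam hH hlam hfu (hfg u hu v hv) (hτg v hv)) hlam0]
  have hG := hGauss u hu v hv
  rw [GaussEq, add_zero] at hG
  obtain ⟨hC₁, hC₂⟩ := hCodazzi u hu v hv
  rw [hG, hC₁, hC₂]
  ext i j
  fin_cases i <;> fin_cases j <;> simp <;> ring

/-- Lax representation with variable spectral parameter:
if `(ω, Q, R)` satisfies (G₀) and (C₀) with mean curvature `H = 1/(f + g)`, then with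
`λ = (1 − 2τg)/(1 + 2τf)` the pair `U_λ, V_λ` satisfies the zero curvature equation
`∂_u V_λ − ∂_v U_λ + [U_λ, V_λ] = 0` on `D = I × J`. -/
theorem statement1
    (I J : Set ℝ) (hIopen : IsOpen I) (hIint : I.OrdConnected)
    (hJopen : IsOpen J) (hJint : J.OrdConnected)
    (f g : ℝ → ℝ)
    (hf : ContDiffOn ℝ (⊤ : ℕ∞) f I) (hg : ContDiffOn ℝ (⊤ : ℕ∞) g J)
    (hfg : ∀ u ∈ I, ∀ v ∈ J, f u + g v ≠ 0)
    (τ : ℝ)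
    (hτf : ∀ u ∈ I, 1 + 2 * τ * f u ≠ 0)
    (hτg : ∀ v ∈ J, 1 - 2 * τ * g v ≠ 0)
    (H lam : ℝ → ℝ → ℝ)
    (hH : ∀ u v, H u v = 1 / (f u + g v))
    (hlam : ∀ u v, lam u v = (1 - 2 * τ * g v) / (1 + 2 * τ * f u))
    (ω Q R : ℝ → ℝ → ℝ)
    (hω : Smooth2 ω (I ×ˢ J)) (hQ : Smooth2 Q (I ×ˢ J)) (hR : Smooth2 R (I ×ˢ J))
    (hGauss : ∀ u ∈ I, ∀ v ∈ J, GaussEq 0 ω Q R H u v)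
    (hCodazzi : ∀ u ∈ I, ∀ v ∈ J, CodazziEq ω Q R H u v) :
    ∀ u ∈ I, ∀ v ∈ J,
      mderiv (fun x => Vmat ω R H lam x v) u - mderiv (fun y => Umat ω Q H lam u y) v +
        (Umat ω Q H lam u v * Vmat ω R H lam u v - Vmat ω R H lam u v * Umat ω Q H lam u v)
        = 0 :=
  statement1_general I J hIopen hJopen f g hf hg hfg τ hτf hτg H lam hH hlam ω Q R hω hQ hR hGauss
    hCodazzi
end
end

section
/- Let I, J ⊆ ℝ be open intervals, D = I × J, f : I → ℝ, g : J → ℝ smooth with f + g nowhere zero, H = 1/(f + g), and let ω, Q, R : D → ℝ be smooth satisfying the Gauss equation (G₀) and the Codazzi equations (C₀) with mean curvature H. Let T ⊆ ℝ be an open interval such that 1 + 2τ f(u) ≠ 0 and 1 − 2τ g(v) ≠ 0 for all (u,v) ∈ D, τ ∈ T, and set λ(u,v;τ) = (1 − 2τ g(v))/(1 + 2τ f(u)). Let Φ : D × T → SL₂(ℝ) be smooth with ∂_u Φ = Φ U_λ and ∂_v Φ = Φ V_λ for each τ ∈ T, where U_λ = [[−ω_u/4, −Q e^{−ω/2}],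 [(H/2) λ e^{ω/2}, ω_u/4]], V_λ = [[ω_v/4, −(H/2) λ^{−1} e^{ω/2}], [R e^{−ω/2}, −ω_v/4]]. Define F = −(∂_τ Φ)Φ^{−1} and N = Φ k′ Φ^{−1}, where k′ = diag(−1, 1). Then for each fixed τ ∈ T: tr F = 0; with the bilinear form ⟨X,Y⟩ = (1/2)tr(XY) one has ⟨∂_u F, ∂_u F⟩ = 0, ⟨∂_v F, ∂_v F⟩ = 0, 2⟨∂_u F, ∂_v F⟩ = e^ω/((1 + 2τf)²(1 − 2τg)²), ⟨N,N⟩ = 1, and ⟨∂_u F, N⟩ = ⟨∂_v F, N⟩ = 0. -/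
/-!
Differentiating `F = -(∂_τΦ)Φ⁻¹` in `u`, with `∂_u∂_τΦ = ∂_τ(ΦU_λ) = (∂_τΦ)U_λ + Φ ∂_τU_λ`
(equality of mixed partials) and `∂_uΦ⁻¹ = -U_λΦ⁻¹`, gives `F_u = -Φ (∂_τU_λ) Φ⁻¹`; likewise
`F_v = -Φ (∂_τV_λ) Φ⁻¹`, while `N = Φ k′ Φ⁻¹`. As `⟨X, Y⟩ = tr(XY)/2` is invariant under
conjugation, everything reduces to the constant matrices `∂_τU_λ` (strictly lower triangular),
`∂_τV_λ` (strictly upper triangular) and `k′`: the first two are null and orthogonal to `k′`,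
and their product gives the metric through `∂_τλ = -2(f+g)/(1+2τf)²` and
`∂_τλ⁻¹ = 2(f+g)/(1-2τg)²`. Finally `tr F = 0` is the derivative of `det Φ ≡ 1`
(Jacobi's formula).
-/

open Matrix

noncomputable section

/-- The matrix `k′ = diag(−1, 1)`. -/
def kmat : Matrix (Fin 2) (Fin 2) ℝ := !![-1, 0; 0, 1]

/-- The scalar product `⟨X,Y⟩ = (1/2) tr(XY)` (the metric of `E³₁ = 𝔰𝔩₂ℝ`). -/
def form1 (X Y : Matrix (Fin 2) (Fin 2) ℝ) : ℝ := (1 / 2) * (X * Y).trace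

open Filter Topology

section Slices

variable {E : Type*} [NormedAddCommGroup E] [NormedSpace ℝ E] {ψ : ℝ × ℝ → E}
  {L : ℝ × ℝ →L[ℝ] E} {a b : ℝ}

lemma HasFDerivAt.hasDerivAt_fst_slice (h : HasFDerivAt ψ L (a, b)) :
    HasDerivAt (fun x => ψ (x, b)) (L (1, 0)) a := by
  exact (h.comp a (hasFDerivAt_prodMk_left a b)).hasDerivAt

lemma HasFDerivAt.hasDerivAt_snd_slice (h : HasFDerivAt ψ L (a, b)) :
    HasDerivAt (fun y => ψ (a, y)) (L (0, 1)) b := by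
  exact (h.comp b (hasFDerivAt_prodMk_right a b)).hasDerivAt

end Slices

lemma hasDerivAt_deriv_swap {φ : ℝ → ℝ → ℝ} {a b D : ℝ}
    (hφ : ContDiffAt ℝ 2 (Function.uncurry φ) (a, b))
    (h : HasDerivAt (fun y => deriv (fun x => φ x y) a) D b) :
    HasDerivAt (fun x => deriv (fun y => φ x y) b) D a := by
  have hdiff : ∀ᶠ p in 𝓝 (a, b), DifferentiableAt ℝ (Function.uncurry φ) p :=
    (hφ.eventually (by simp)).mono fun p hp => hp.differentiableAt (by simp)
  have h2 : HasFDerivAt (fderiv ℝ (Function.uncurry φ))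
      (fderiv ℝ (fderiv ℝ (Function.uncurry φ)) (a, b)) (a, b) :=
    ((hφ.fderiv_right (m := 1) (by norm_num)).differentiableAt (by simp)).hasFDerivAt
  have hsymm := hφ.isSymmSndFDerivAt (by simp) (1, 0) (0, 1)
  have hx : ∀ᶠ x in 𝓝 a,
      deriv (fun y => φ x y) b = fderiv ℝ (Function.uncurry φ) (x, b) (0, 1) :=
    ((continuousAt_id.prodMk continuousAt_const).eventually hdiff).mono fun x hx =>
      hx.hasFDerivAt.hasDerivAt_snd_slice.deriv
  have hy : ∀ᶠ y in 𝓝 b,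
      deriv (fun x => φ x y) a = fderiv ℝ (Function.uncurry φ) (a, y) (1, 0) :=
    ((continuousAt_const.prodMk continuousAt_id).eventually hdiff).mono fun y hy =>
      hy.hasFDerivAt.hasDerivAt_fst_slice.deriv
  have hDy := (h2.clm_apply (hasFDerivAt_const ((1 : ℝ), (0 : ℝ)) _)).hasDerivAt_snd_slice
  have hDx := (h2.clm_apply (hasFDerivAt_const ((0 : ℝ), (1 : ℝ)) _)).hasDerivAt_fst_slice
  simp only [ContinuousLinearMap.comp_zero, zero_add, ContinuousLinearMap.flip_apply] at hDx hDy
  rw [h.unique (hDy.congr_of_eventuallyEq hy), ← hsymm]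
  exact hDx.congr_of_eventuallyEq hx

def HasMatrixDerivAt {m n : Type*} (f : ℝ → Matrix m n ℝ) (A : Matrix m n ℝ) (x : ℝ) : Prop :=
  ∀ i j, HasDerivAt (fun t => f t i j) (A i j) x

namespace HasMatrixDerivAt

variable {m n p : Type*} {x : ℝ}

lemma const (C : Matrix m n ℝ) (x : ℝ) : HasMatrixDerivAt (fun _ => C) 0 x :=
  fun _ _ => hasDerivAt_const x _

lemma neg {f : ℝ → Matrix m n ℝ} {A : Matrix m n ℝ} (h : HasMatrixDerivAt f A x) :
    HasMatrixDerivAt (fun t => -f t) (-A) x :=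
  fun i j => (h i j).neg

lemma congr_of_eventuallyEq {f g : ℝ → Matrix m n ℝ} {A : Matrix m n ℝ}
    (h : HasMatrixDerivAt f A x) (hfg : g =ᶠ[𝓝 x] f) : HasMatrixDerivAt g A x :=
  fun i j => (h i j).congr_of_eventuallyEq (hfg.mono fun _ ht => congrFun (congrFun ht i) j)

lemma unique {f : ℝ → Matrix m n ℝ} {A B : Matrix m n ℝ} (hA : HasMatrixDerivAt f A x)
    (hB : HasMatrixDerivAt f B x) : A = B := by
  ext i j
  exact (hA i j).unique (hB i j)

lemma mul [Fintype n] {f : ℝ → Matrix m n ℝ} {g : ℝ → Matrix n p ℝ} {A : Matrix m n ℝ}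
    {B : Matrix n p ℝ} (hf : HasMatrixDerivAt f A x) (hg : HasMatrixDerivAt g B x) :
    HasMatrixDerivAt (fun t => f t * g t) (A * g x + f x * B) x := by
  intro i j
  simp only [Matrix.mul_apply, Matrix.add_apply, ← Finset.sum_add_distrib]
  exact HasDerivAt.fun_sum fun k _ => (hf i k).mul (hg k j)

variable {f : ℝ → Matrix (Fin 2) (Fin 2) ℝ} {A : Matrix (Fin 2) (Fin 2) ℝ}

lemma mderiv_eq (h : HasMatrixDerivAt f A x) : mderiv f x = A := by
  ext i j
  exact (h i j).deriv

lemma adjugate (h : HasMatrixDerivAt f A x) :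
    HasMatrixDerivAt (fun t => (f t).adjugate) A.adjugate x := by
  intro i j
  fin_cases i <;> fin_cases j <;> simp [Matrix.adjugate_fin_two]
  exacts [h 1 1, (h 0 1).neg, (h 1 0).neg, h 0 0]

lemma det (h : HasMatrixDerivAt f A x) :
    HasDerivAt (fun t => (f t).det) (A * (f x).adjugate).trace x := by
  simp only [Matrix.det_fin_two]
  refine (((h 0 0).mul (h 1 1)).sub ((h 0 1).mul (h 1 0))).congr_deriv ?_
  rw [Matrix.adjugate_fin_two, Matrix.trace_fin_two]
  simp [Matrix.mul_apply]
  ring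

lemma trace_mul_inv_eq_zero (h : HasMatrixDerivAt f A x)
    (hdet : ∀ᶠ t in 𝓝 x, (f t).det = 1) : (A * (f x)⁻¹).trace = 0 := by
  have hconst : HasDerivAt (fun t => (f t).det) 0 x :=
    (hasDerivAt_const x 1).congr_of_eventuallyEq hdet
  rw [Matrix.inv_def, hdet.self_of_nhds, Ring.inverse_one, one_smul]
  exact h.det.unique hconst

lemma inv (h : HasMatrixDerivAt f A x) (hdet : ∀ᶠ t in 𝓝 x, (f t).det = 1) :
    HasMatrixDerivAt (fun t => (f t)⁻¹) (-((f x)⁻¹ * A * (f x)⁻¹)) x := by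
  have hinv_eq : ∀ᶠ t in 𝓝 x, (f t)⁻¹ = (f t).adjugate :=
    hdet.mono fun t ht => by rw [Matrix.inv_def, ht, Ring.inverse_one, one_smul]
  have hinv : HasMatrixDerivAt (fun t => (f t)⁻¹) A.adjugate x :=
    h.adjugate.congr_of_eventuallyEq hinv_eq
  have hunit : IsUnit (f x).det := by rw [hdet.self_of_nhds]; exact isUnit_one
  -- differentiate `f t * (f t)⁻¹ = 1`
  have hprod : A * (f x)⁻¹ + f x * A.adjugate = 0 :=
    (h.mul hinv).unique ((const 1 x).congr_of_eventuallyEq (hdet.mono fun t ht =>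
      Matrix.mul_nonsing_inv _ (by rw [ht]; exact isUnit_one)))
  have hadj : A.adjugate = -((f x)⁻¹ * A * (f x)⁻¹) := by
    rw [← Matrix.one_mul A.adjugate, ← Matrix.nonsing_inv_mul _ hunit, Matrix.mul_assoc,
      eq_neg_of_add_eq_zero_right hprod]
    noncomm_ring
  exact hadj ▸ hinv

end HasMatrixDerivAt

lemma trace_neg_mderiv_mul_inv_eq_zero {Φ : ℝ → Matrix (Fin 2) (Fin 2) ℝ} {t : ℝ}
    (hΦ : ∀ i j, DifferentiableAt ℝ (fun s => Φ s i j) t)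
    (hdet : ∀ᶠ s in 𝓝 t, (Φ s).det = 1) : (-mderiv Φ t * (Φ t)⁻¹).trace = 0 := by
  rw [Matrix.neg_mul, Matrix.trace_neg, neg_eq_zero]
  exact HasMatrixDerivAt.trace_mul_inv_eq_zero (A := mderiv Φ t) (fun i j => (hΦ i j).hasDerivAt)
    hdet

theorem hasMatrixDerivAt_sym {Φ : ℝ → ℝ → Matrix (Fin 2) (Fin 2) ℝ}
    {U : ℝ → Matrix (Fin 2) (Fin 2) ℝ} {Uτ : Matrix (Fin 2) (Fin 2) ℝ} {x s : ℝ}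
    (hΦ : ∀ i j, ContDiffAt ℝ 2 (Function.uncurry fun y s => Φ y s i j) (x, s))
    (hdet : ∀ᶠ y in 𝓝 x, (Φ y s).det = 1)
    (hLax : ∀ᶠ s' in 𝓝 s, mderiv (fun y => Φ y s') x = Φ x s' * U s')
    (hU : HasMatrixDerivAt U Uτ s) :
    HasMatrixDerivAt (fun y => -mderiv (Φ y) s * (Φ y s)⁻¹) (-(Φ x s * Uτ * (Φ x s)⁻¹)) x := by
  have hdiff i j : HasFDerivAt (Function.uncurry fun y s => Φ y s i j) _ (x, s) :=
    ((hΦ i j).differentiableAt (by norm_num)).hasFDerivAt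
  have hΦs : HasMatrixDerivAt (Φ x) (mderiv (Φ x) s) s :=
    fun i j => (hdiff i j).hasDerivAt_snd_slice.differentiableAt.hasDerivAt
  have hΦx : HasMatrixDerivAt (fun y => Φ y s) (Φ x s * U s) x := by
    rw [← hLax.self_of_nhds]
    exact fun i j => (hdiff i j).hasDerivAt_fst_slice.differentiableAt.hasDerivAt
  have hmixed :
      HasMatrixDerivAt (fun y => mderiv (Φ y) s) (mderiv (Φ x) s * U s + Φ x s * Uτ) x :=
    fun i j => hasDerivAt_deriv_swap (hΦ i j) ((hΦs.mul hU i j).congr_of_eventuallyEq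
      (hLax.mono fun s' hs' => congrFun (congrFun hs' i) j))
  have hunit : IsUnit (Φ x s).det := by rw [hdet.self_of_nhds]; exact isUnit_one
  convert hmixed.neg.mul (hΦx.inv hdet) using 1
  rw [← Matrix.mul_assoc (Φ x s)⁻¹, Matrix.nonsing_inv_mul _ hunit, Matrix.one_mul]
  noncomm_ring

lemma hasDerivAt_spectral {a b t : ℝ} (ha : 1 + 2 * t * a ≠ 0) :
    HasDerivAt (fun s => (1 - 2 * s * b) / (1 + 2 * s * a))
      (-2 * (a + b) / (1 + 2 * t * a) ^ 2) t := by
  have hnum : HasDerivAt (fun s => 1 - 2 * s * b) (-(2 * b)) t := by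
    simpa using ((hasDerivAt_id t).const_mul 2).mul_const b |>.const_sub 1
  have hden : HasDerivAt (fun s => 1 + 2 * s * a) (2 * a) t := by
    simpa using ((hasDerivAt_id t).const_mul 2).mul_const a |>.const_add 1
  refine (hnum.div hden ha).congr_deriv ?_
  field_simp
  ring

lemma hasDerivAt_spectral_inv {a b t : ℝ} (hb : 1 - 2 * t * b ≠ 0) :
    HasDerivAt (fun s => ((1 - 2 * s * b) / (1 + 2 * s * a))⁻¹)
      (2 * (a + b) / (1 - 2 * t * b) ^ 2) t := by
  -- the reciprocal is the same kind of quotient, with `(a, b)` replaced by `(-b, -a)`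
  have h := hasDerivAt_spectral (a := -b) (b := -a) (t := t)
    (by contrapose! hb; linear_combination hb)
  simp only [inv_div]
  convert h using 2 <;> ring

lemma hasMatrixDerivAt_Umat {ω Q H : ℝ → ℝ → ℝ} {lam : ℝ → ℝ → ℝ → ℝ} {u v t l : ℝ}
    (hl : HasDerivAt (fun s => lam s u v) l t) :
    HasMatrixDerivAt (fun s => Umat ω Q H (lam s) u v)
      !![0, 0; H u v / 2 * l * Real.exp (ω u v / 2), 0] t := by
  intro i j
  fin_cases i <;> fin_cases j <;> simp only [Umat]
  exacts [hasDerivAt_const t _, hasDerivAt_const t _,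
    (hl.const_mul _).mul_const _, hasDerivAt_const t _]

lemma hasMatrixDerivAt_Vmat {ω R H : ℝ → ℝ → ℝ} {lam : ℝ → ℝ → ℝ → ℝ} {u v t m : ℝ}
    (hm : HasDerivAt (fun s => (lam s u v)⁻¹) m t) :
    HasMatrixDerivAt (fun s => Vmat ω R H (lam s) u v)
      !![0, -(H u v / 2) * m * Real.exp (ω u v / 2); 0, 0] t := by
  intro i j
  fin_cases i <;> fin_cases j <;> simp only [Vmat]
  exacts [hasDerivAt_const t _, (hm.const_mul _).mul_const _,
    hasDerivAt_const t _, hasDerivAt_const t _]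

lemma form1_neg_left (X Y : Matrix (Fin 2) (Fin 2) ℝ) : form1 (-X) Y = -form1 X Y := by
  simp [form1]

lemma form1_neg_right (X Y : Matrix (Fin 2) (Fin 2) ℝ) : form1 X (-Y) = -form1 X Y := by
  simp [form1]

lemma form1_conj {P : Matrix (Fin 2) (Fin 2) ℝ} (hP : IsUnit P.det)
    (X Y : Matrix (Fin 2) (Fin 2) ℝ) :
    form1 (P * X * P⁻¹) (P * Y * P⁻¹) = form1 X Y := by
  have h : P * X * P⁻¹ * (P * Y * P⁻¹) = P * (X * Y) * P⁻¹ := by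
    simp only [Matrix.mul_assoc, Matrix.nonsing_inv_mul_cancel_left _ _ hP]
  rw [form1, form1, h, Matrix.trace_mul_cycle, Matrix.nonsing_inv_mul _ hP, Matrix.one_mul]

lemma two_mul_form1_lower_upper (α β : ℝ) :
    2 * form1 !![0, 0; α, 0] !![0, β; 0, 0] = α * β := by
  simp [form1, Matrix.trace_fin_two]

theorem statement2_general
    (I J T : Set ℝ)
    (hIopen : IsOpen I)
    (hJopen : IsOpen J)
    (hTopen : IsOpen T)
    (f g : ℝ → ℝ)
    (hfg : ∀ u ∈ I, ∀ v ∈ J, f u + g v ≠ 0)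
    (hτf : ∀ t ∈ T, ∀ u ∈ I, 1 + 2 * t * f u ≠ 0)
    (hτg : ∀ t ∈ T, ∀ v ∈ J, 1 - 2 * t * g v ≠ 0)
    (H : ℝ → ℝ → ℝ) (hH : ∀ u v, H u v = 1 / (f u + g v))
    (lam : ℝ → ℝ → ℝ → ℝ)
    (hlam : ∀ t u v, lam t u v = (1 - 2 * t * g v) / (1 + 2 * t * f u))
    (ω Q R : ℝ → ℝ → ℝ)
    (Φ : ℝ → ℝ → ℝ → Matrix (Fin 2) (Fin 2) ℝ)
    (hΦsmooth : ∀ i j, ContDiffOn ℝ (⊤ : ℕ∞)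
      (fun p : ℝ × ℝ × ℝ => Φ p.1 p.2.1 p.2.2 i j) (I ×ˢ J ×ˢ T))
    (hΦdet : ∀ u ∈ I, ∀ v ∈ J, ∀ t ∈ T, (Φ u v t).det = 1)
    (hLaxU : ∀ u ∈ I, ∀ v ∈ J, ∀ t ∈ T,
      mderiv (fun x => Φ x v t) u = Φ u v t * Umat ω Q H (lam t) u v)
    (hLaxV : ∀ u ∈ I, ∀ v ∈ J, ∀ t ∈ T,
      mderiv (fun y => Φ u y t) v = Φ u v t * Vmat ω R H (lam t) u v)
    (F N : ℝ → ℝ → ℝ → Matrix (Fin 2) (Fin 2) ℝ)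
    (hF : ∀ u v t, F u v t = -(mderiv (fun s => Φ u v s) t) * (Φ u v t)⁻¹)
    (hN : ∀ u v t, N u v t = Φ u v t * kmat * (Φ u v t)⁻¹) :
    ∀ u ∈ I, ∀ v ∈ J, ∀ t ∈ T,
      (F u v t).trace = 0 ∧
      form1 (mderiv (fun x => F x v t) u) (mderiv (fun x => F x v t) u) = 0 ∧
      form1 (mderiv (fun y => F u y t) v) (mderiv (fun y => F u y t) v) = 0 ∧
      2 * form1 (mderiv (fun x => F x v t) u) (mderiv (fun y => F u y t) v)
        = Real.exp (ω u v) / ((1 + 2 * t * f u) ^ 2 * (1 - 2 * t * g v) ^ 2) ∧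
      form1 (N u v t) (N u v t) = 1 ∧
      form1 (mderiv (fun x => F x v t) u) (N u v t) = 0 ∧
      form1 (mderiv (fun y => F u y t) v) (N u v t) = 0 := by
  intro u hu v hv t ht
  have hΦ i j : ContDiffAt ℝ 2 (fun p : ℝ × ℝ × ℝ => Φ p.1 p.2.1 p.2.2 i j) (u, v, t) :=
    ((hΦsmooth i j).contDiffAt ((hIopen.prod (hJopen.prod hTopen)).mem_nhds
      ⟨hu, hv, ht⟩)).of_le (WithTop.coe_le_coe.mpr le_top)
  have hFu : mderiv (fun x => F x v t) u = -(Φ u v t *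
      !![0, 0; H u v / 2 * (-2 * (f u + g v) / (1 + 2 * t * f u) ^ 2) *
        Real.exp (ω u v / 2), 0] * (Φ u v t)⁻¹) := by
    simp only [hF]
    exact (hasMatrixDerivAt_sym (Φ := fun x s => Φ x v s)
      (fun i j => (hΦ i j).comp (u, t) (f := fun p : ℝ × ℝ => (p.1, v, p.2)) (by fun_prop))
      ((hIopen.eventually_mem hu).mono fun x hx => hΦdet x hx v hv t ht)
      ((hTopen.eventually_mem ht).mono fun s hs => hLaxU u hu v hv s hs)
      (hasMatrixDerivAt_Umat ((hasDerivAt_spectral (hτf t ht u hu)).congr_of_eventuallyEq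
        (.of_forall fun s => hlam s u v)))).mderiv_eq
  have hFv : mderiv (fun y => F u y t) v = -(Φ u v t *
      !![0, -(H u v / 2) * (2 * (f u + g v) / (1 - 2 * t * g v) ^ 2) *
        Real.exp (ω u v / 2); 0, 0] * (Φ u v t)⁻¹) := by
    simp only [hF]
    exact (hasMatrixDerivAt_sym (Φ := fun y s => Φ u y s)
      (fun i j => (hΦ i j).comp (v, t) (f := fun p : ℝ × ℝ => (u, p.1, p.2)) (by fun_prop))
      ((hJopen.eventually_mem hv).mono fun y hy => hΦdet u hu y hy t ht)
      ((hTopen.eventually_mem ht).mono fun s hs => hLaxV u hu v hv s hs)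
      (hasMatrixDerivAt_Vmat ((hasDerivAt_spectral_inv (hτg t ht v hv)).congr_of_eventuallyEq
        (.of_forall fun s => by simp only [hlam])))).mderiv_eq
  have htr : (F u v t).trace = 0 := by
    rw [hF]
    exact trace_neg_mderiv_mul_inv_eq_zero
      (fun i j => ((hΦ i j).differentiableAt (by norm_num)).comp t (f := fun s => (u, v, s))
        (by fun_prop))
      ((hTopen.eventually_mem ht).mono fun s hs => hΦdet u hu v hv s hs)
  have hP : IsUnit (Φ u v t).det := by rw [hΦdet u hu v hv t ht]; exact isUnit_one
  have hexp : Real.exp (ω u v) = Real.exp (ω u v / 2) ^ 2 := by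
    rw [sq, ← Real.exp_add, add_halves]
  have hfg₀ := hfg u hu v hv
  rw [hFu, hFv, hN]
  simp only [form1_neg_left, form1_neg_right, neg_neg, form1_conj hP]
  refine ⟨htr, by simp [form1, Matrix.trace_fin_two], by simp [form1, Matrix.trace_fin_two], ?_,
    by norm_num [form1, kmat], by simp [form1, kmat, Matrix.trace_fin_two],
    by simp [form1, kmat, Matrix.trace_fin_two]⟩
  rw [two_mul_form1_lower_upper, hH, hexp]
  field_simp

/-- Sym formula, Proposition 3.4: for a solution `Φ` of the Lax pair
with variable spectral parameter `λ(u,v;τ) = (1 − 2τg)/(1 + 2τf)`, the Sym formula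
`F = −(∂_τ Φ)Φ⁻¹` gives a trace-free (i.e. `𝔰𝔩₂ℝ ≅ E³₁`-valued) map which is conformal
with `⟨F_u,F_u⟩ = ⟨F_v,F_v⟩ = 0`, `2⟨F_u,F_v⟩ = e^ω/((1+2τf)²(1−2τg)²)`, and
`N = Φk′Φ⁻¹` is a unit normal. -/
theorem statement2
    (I J T : Set ℝ)
    (hIopen : IsOpen I) (hIint : I.OrdConnected)
    (hJopen : IsOpen J) (hJint : J.OrdConnected)
    (hTopen : IsOpen T) (hTint : T.OrdConnected)
    (f g : ℝ → ℝ)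
    (hf : ContDiffOn ℝ (⊤ : ℕ∞) f I) (hg : ContDiffOn ℝ (⊤ : ℕ∞) g J)
    (hfg : ∀ u ∈ I, ∀ v ∈ J, f u + g v ≠ 0)
    (hτf : ∀ t ∈ T, ∀ u ∈ I, 1 + 2 * t * f u ≠ 0)
    (hτg : ∀ t ∈ T, ∀ v ∈ J, 1 - 2 * t * g v ≠ 0)
    (H : ℝ → ℝ → ℝ) (hH : ∀ u v, H u v = 1 / (f u + g v))
    (lam : ℝ → ℝ → ℝ → ℝ)
    (hlam : ∀ t u v, lam t u v = (1 - 2 * t * g v) / (1 + 2 * t * f u))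
    (ω Q R : ℝ → ℝ → ℝ)
    (hω : Smooth2 ω (I ×ˢ J)) (hQ : Smooth2 Q (I ×ˢ J)) (hR : Smooth2 R (I ×ˢ J))
    (hGauss : ∀ u ∈ I, ∀ v ∈ J, GaussEq 0 ω Q R H u v)
    (hCodazzi : ∀ u ∈ I, ∀ v ∈ J, CodazziEq ω Q R H u v)
    (Φ : ℝ → ℝ → ℝ → Matrix (Fin 2) (Fin 2) ℝ)
    (hΦsmooth : ∀ i j, ContDiffOn ℝ (⊤ : ℕ∞)
      (fun p : ℝ × ℝ × ℝ => Φ p.1 p.2.1 p.2.2 i j) (I ×ˢ J ×ˢ T))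
    (hΦdet : ∀ u ∈ I, ∀ v ∈ J, ∀ t ∈ T, (Φ u v t).det = 1)
    (hLaxU : ∀ u ∈ I, ∀ v ∈ J, ∀ t ∈ T,
      mderiv (fun x => Φ x v t) u = Φ u v t * Umat ω Q H (lam t) u v)
    (hLaxV : ∀ u ∈ I, ∀ v ∈ J, ∀ t ∈ T,
      mderiv (fun y => Φ u y t) v = Φ u v t * Vmat ω R H (lam t) u v)
    (F N : ℝ → ℝ → ℝ → Matrix (Fin 2) (Fin 2) ℝ)
    (hF : ∀ u v t, F u v t = -(mderiv (fun s => Φ u v s) t) * (Φ u v t)⁻¹)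
    (hN : ∀ u v t, N u v t = Φ u v t * kmat * (Φ u v t)⁻¹) :
    ∀ u ∈ I, ∀ v ∈ J, ∀ t ∈ T,
      (F u v t).trace = 0 ∧
      form1 (mderiv (fun x => F x v t) u) (mderiv (fun x => F x v t) u) = 0 ∧
      form1 (mderiv (fun y => F u y t) v) (mderiv (fun y => F u y t) v) = 0 ∧
      2 * form1 (mderiv (fun x => F x v t) u) (mderiv (fun y => F u y t) v)
        = Real.exp (ω u v) / ((1 + 2 * t * f u) ^ 2 * (1 - 2 * t * g v) ^ 2) ∧
      form1 (N u v t) (N u v t) = 1 ∧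
      form1 (mderiv (fun x => F x v t) u) (N u v t) = 0 ∧
      form1 (mderiv (fun y => F u y t) v) (N u v t) = 0 :=
  statement2_general I J T hIopen hJopen hTopen f g hfg hτf hτg H hH lam hlam ω Q R Φ hΦsmooth hΦdet
    hLaxU hLaxV F N hF hN
end
end

section
/- Let I, J ⊆ ℝ be open intervals, D = I × J, f : I → ℝ, g : J → ℝ smooth with f + g nowhere zero, H = 1/(f + g), and let ω, Q, R : D → ℝ be smooth satisfying the Gauss equation (G₀) and the Codazzi equations (C₀) with mean curvature H. Fix τ ∈ ℝ, τ ≠ 0, with 1 ± 2τ f(u) ≠ 0 and 1 ± 2τ g(v) ≠ 0 on D, and set λ₊ = (1 − 2τg)/(1 + 2τf), λ₋ = (1 + 2τg)/(1 − 2τf). Let Φ⁺, Φ⁻ : D → SL₂(ℝ) be smooth with ∂_u Φ^± = Φ^± U_{λ_±}, ∂_v Φ^± = Φ^± V_{λ_±}, where U_λ = [[−ω_u/4, −Q e^{−ω/2}], [(H/2) λ e^{ω/2}, ω_u/4]] and V_λ = [[ω_v/4, −(H/2) λ^{−1} e^{ω/2}], [R e^{−ω/2}, −ω_v/4]]. Define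 F = Φ⁺ (Φ⁻)^{−1} and N = −Φ⁺ k′ (Φ⁻)^{−1} with k′ = diag(−1,1). Then, with the scalar product ⟨X,Y⟩ = (1/2)(tr(XY) − tr(X)tr(Y)) on 2×2 real matrices: ⟨F,F⟩ = −1; ⟨∂_u F, ∂_u F⟩ = ⟨∂_v F, ∂_v F⟩ = 0; 2⟨∂_u F, ∂_v F⟩ = 4τ² e^ω/((1 − 4τ²f²)(1 − 4τ²g²)); ⟨N,N⟩ = 1; and ⟨N, F⟩ = ⟨N, ∂_u F⟩ = ⟨N, ∂_v F⟩ = 0. -/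
open Matrix

noncomputable section

/-- The scalar product `⟨X,Y⟩ = (1/2)(tr(XY) − tr(X)tr(Y))` (the metric of `E⁴₂ = M₂ℝ`). -/
def form2 (X Y : Matrix (Fin 2) (Fin 2) ℝ) : ℝ :=
  (1 / 2) * ((X * Y).trace - X.trace * Y.trace)

/-!
Since `det Φ⁺ = det (Φ⁻)⁻¹ = 1`, the map `X ↦ Φ⁺ X (Φ⁻)⁻¹` preserves `⟨·,·⟩`, the polarization of
`−det`. Differentiating `F = Φ⁺ (Φ⁻)⁻¹` with the two Lax pairs gives
`F_u = Φ⁺ (U_{λ₊} − U_{λ₋}) (Φ⁻)⁻¹` and `F_v = Φ⁺ (V_{λ₊} − V_{λ₋}) (Φ⁻)⁻¹`; the diagonals do not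
depend on `λ`, so these differences are strictly lower resp. upper triangular. All eight identities
thus reduce to `2 × 2` computations with `1`, `k′` and these nilpotent matrices, the last one using
`(λ₊ − λ₋)(λ₊⁻¹ − λ₋⁻¹) = −16τ²(f + g)² / ((1 − 4τ²f²)(1 − 4τ²g²))`.
-/

open Filter Topology

theorem form2_fin_two_of (a b c d a' b' c' d' : ℝ) :
    form2 !![a, b; c, d] !![a', b'; c', d'] = (b * c' + c * b' - a * d' - d * a') / 2 := by
  simp only [form2, trace_fin_two_of, mul_fin_two]
  ring

theorem form2_eq_det (X Y : Matrix (Fin 2) (Fin 2) ℝ) :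
    form2 X Y = (X.det + Y.det - (X + Y).det) / 2 := by
  simp only [form2, det_fin_two, trace_fin_two, Matrix.mul_apply, Matrix.add_apply,
    Fin.sum_univ_two]
  ring

theorem form2_mul_mul (C D X Y : Matrix (Fin 2) (Fin 2) ℝ) :
    form2 (C * X * D) (C * Y * D) = C.det * D.det * form2 X Y := by
  have hadd : C * X * D + C * Y * D = C * (X + Y) * D := by noncomm_ring
  simp only [form2_eq_det, hadd, det_mul]
  ring

theorem adjugate_fin_two_eq_neg_of_trace_eq_zero {W : Matrix (Fin 2) (Fin 2) ℝ}
    (hW : W.trace = 0) : W.adjugate = -W := by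
  rw [trace_fin_two] at hW
  rw [adjugate_fin_two, eta_fin_two W]
  ext i j
  fin_cases i <;> fin_cases j <;> simp <;> linarith

theorem trace_Umat (ω Q H lam : ℝ → ℝ → ℝ) (u v : ℝ) : (Umat ω Q H lam u v).trace = 0 := by
  simp [Umat, trace_fin_two_of, neg_div]

theorem trace_Vmat (ω R H lam : ℝ → ℝ → ℝ) (u v : ℝ) : (Vmat ω R H lam u v).trace = 0 := by
  simp [Vmat, trace_fin_two_of, neg_div]

theorem Umat_sub_Umat (ω Q H lam mu : ℝ → ℝ → ℝ) (u v : ℝ) :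
    Umat ω Q H lam u v - Umat ω Q H mu u v
      = !![0, 0; H u v / 2 * (lam u v - mu u v) * Real.exp (ω u v / 2), 0] := by
  ext i j
  fin_cases i <;> fin_cases j <;> simp [Umat, mul_sub, sub_mul]

theorem Vmat_sub_Vmat (ω R H lam mu : ℝ → ℝ → ℝ) (u v : ℝ) :
    Vmat ω R H lam u v - Vmat ω R H mu u v
      = !![0, -(H u v / 2) * ((lam u v)⁻¹ - (mu u v)⁻¹) * Real.exp (ω u v / 2); 0, 0] := by
  ext i j
  fin_cases i <;> fin_cases j <;> simp [Vmat, mul_sub]; ring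

theorem hasDerivAt_mul_apply {m n p : Type*} [Fintype n] {t : ℝ}
    {A : ℝ → Matrix m n ℝ} {B : ℝ → Matrix n p ℝ} {A' : Matrix m n ℝ} {B' : Matrix n p ℝ}
    (hA : ∀ i j, HasDerivAt (fun x => A x i j) (A' i j) t)
    (hB : ∀ i j, HasDerivAt (fun x => B x i j) (B' i j) t) (i : m) (j : p) :
    HasDerivAt (fun x => (A x * B x) i j) ((A' * B t + A t * B') i j) t := by
  simp only [Matrix.mul_apply, Matrix.add_apply, ← Finset.sum_add_distrib]
  exact HasDerivAt.fun_sum fun k _ => (hA i k).mul (hB k j)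

theorem hasDerivAt_adjugate_apply {t : ℝ} {A : ℝ → Matrix (Fin 2) (Fin 2) ℝ}
    {A' : Matrix (Fin 2) (Fin 2) ℝ} (hA : ∀ i j, HasDerivAt (fun x => A x i j) (A' i j) t)
    (i j : Fin 2) : HasDerivAt (fun x => (A x).adjugate i j) (A'.adjugate i j) t := by
  simp only [adjugate_fin_two]
  fin_cases i <;> fin_cases j
  exacts [hA 1 1, (hA 0 1).neg, (hA 1 0).neg, hA 0 0]

theorem mderiv_eq_of_hasDerivAt {t : ℝ} {A : ℝ → Matrix (Fin 2) (Fin 2) ℝ}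
    {A' : Matrix (Fin 2) (Fin 2) ℝ}
    (hA : ∀ i j, HasDerivAt (fun x => A x i j) (A' i j) t) : mderiv A t = A' := by
  ext i j
  exact (hA i j).deriv

theorem mderiv_mul_inv_of_mderiv_eq_mul {P M : ℝ → Matrix (Fin 2) (Fin 2) ℝ}
    {U W : Matrix (Fin 2) (Fin 2) ℝ} {t : ℝ}
    (hP : ∀ i j, DifferentiableAt ℝ (fun x => P x i j) t)
    (hM : ∀ i j, DifferentiableAt ℝ (fun x => M x i j) t)
    (hPU : mderiv P t = P t * U) (hMW : mderiv M t = M t * W) (hW : W.trace = 0)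
    (hdet : ∀ᶠ x in 𝓝 t, (M x).det = 1) :
    mderiv (fun x => P x * (M x)⁻¹) t = P t * (U - W) * (M t)⁻¹ := by
  have inv_eq_adjugate : ∀ x, (M x).det = 1 → (M x)⁻¹ = (M x).adjugate := fun x hx => by
    rw [inv_def, hx, Ring.inverse_one, one_smul]
  have hP' : ∀ i j, HasDerivAt (fun x => P x i j) ((P t * U) i j) t := fun i j => by
    rw [← hPU]; exact (hP i j).hasDerivAt
  have hM' : ∀ i j, HasDerivAt (fun x => M x i j) ((M t * W) i j) t := fun i j => by
    rw [← hMW]; exact (hM i j).hasDerivAt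
  have hprod := hasDerivAt_mul_apply hP' (hasDerivAt_adjugate_apply hM')
  rw [adjugate_mul_distrib, adjugate_fin_two_eq_neg_of_trace_eq_zero hW,
    ← inv_eq_adjugate t hdet.self_of_nhds] at hprod
  apply mderiv_eq_of_hasDerivAt
  intro i j
  refine (hprod i j).congr_of_eventuallyEq ?_ |>.congr_deriv ?_
  · filter_upwards [hdet] with x hx
    rw [inv_eq_adjugate x hx]
  · rw [neg_mul, mul_neg, ← sub_eq_add_neg, ← mul_assoc, ← mul_sub_right_distrib,
      ← mul_sub_left_distrib]

theorem differentiableAt_slices_of_contDiffOn {φ : ℝ × ℝ → ℝ} {s : Set (ℝ × ℝ)}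
    {n : WithTop ℕ∞} {u v : ℝ} (hφ : ContDiffOn ℝ n φ s) (hn : n ≠ 0) (hs : s ∈ 𝓝 (u, v)) :
    DifferentiableAt ℝ (fun x => φ (x, v)) u ∧ DifferentiableAt ℝ (fun y => φ (u, y)) v := by
  have h := (hφ.contDiffAt hs).differentiableAt hn
  exact ⟨h.comp u (differentiableAt_id.prodMk (differentiableAt_const v)),
    h.comp v ((differentiableAt_const u).prodMk differentiableAt_id)⟩

theorem spectral_parameters_sub_mul_inv_sub {f g τ : ℝ} (hfg : f + g ≠ 0)
    (hf₁ : 1 + 2 * τ * f ≠ 0) (hf₂ : 1 - 2 * τ * f ≠ 0)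
    (hg₁ : 1 + 2 * τ * g ≠ 0) (hg₂ : 1 - 2 * τ * g ≠ 0) :
    (1 / (f + g)) ^ 2 * ((1 - 2 * τ * g) / (1 + 2 * τ * f) - (1 + 2 * τ * g) / (1 - 2 * τ * f))
      * (((1 - 2 * τ * g) / (1 + 2 * τ * f))⁻¹ - ((1 + 2 * τ * g) / (1 - 2 * τ * f))⁻¹)
      = -16 * τ ^ 2 / ((1 - 4 * τ ^ 2 * f ^ 2) * (1 - 4 * τ ^ 2 * g ^ 2)) := by
  rw [show 1 - 4 * τ ^ 2 * f ^ 2 = (1 + 2 * τ * f) * (1 - 2 * τ * f) by ring,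
    show 1 - 4 * τ ^ 2 * g ^ 2 = (1 + 2 * τ * g) * (1 - 2 * τ * g) by ring]
  rw [inv_div, inv_div, div_sub_div _ _ hf₁ hf₂, div_sub_div _ _ hg₂ hg₁]
  field_simp
  ring

theorem statement3_general
    (I J : Set ℝ)
    (hIopen : IsOpen I)
    (hJopen : IsOpen J)
    (f g : ℝ → ℝ)
    (hfg : ∀ u ∈ I, ∀ v ∈ J, f u + g v ≠ 0)
    (τ : ℝ)
    (hτf₁ : ∀ u ∈ I, 1 + 2 * τ * f u ≠ 0) (hτf₂ : ∀ u ∈ I, 1 - 2 * τ * f u ≠ 0)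
    (hτg₁ : ∀ v ∈ J, 1 + 2 * τ * g v ≠ 0) (hτg₂ : ∀ v ∈ J, 1 - 2 * τ * g v ≠ 0)
    (H lamp lamm : ℝ → ℝ → ℝ)
    (hH : ∀ u v, H u v = 1 / (f u + g v))
    (hlamp : ∀ u v, lamp u v = (1 - 2 * τ * g v) / (1 + 2 * τ * f u))
    (hlamm : ∀ u v, lamm u v = (1 + 2 * τ * g v) / (1 - 2 * τ * f u))
    (ω Q R : ℝ → ℝ → ℝ)
    (Φp Φm : ℝ → ℝ → Matrix (Fin 2) (Fin 2) ℝ)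
    (hΦpsmooth : ∀ i j, ContDiffOn ℝ (⊤ : ℕ∞) (fun p : ℝ × ℝ => Φp p.1 p.2 i j) (I ×ˢ J))
    (hΦmsmooth : ∀ i j, ContDiffOn ℝ (⊤ : ℕ∞) (fun p : ℝ × ℝ => Φm p.1 p.2 i j) (I ×ˢ J))
    (hΦpdet : ∀ u ∈ I, ∀ v ∈ J, (Φp u v).det = 1)
    (hΦmdet : ∀ u ∈ I, ∀ v ∈ J, (Φm u v).det = 1)
    (hLaxUp : ∀ u ∈ I, ∀ v ∈ J,
      mderiv (fun x => Φp x v) u = Φp u v * Umat ω Q H lamp u v)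
    (hLaxVp : ∀ u ∈ I, ∀ v ∈ J,
      mderiv (fun y => Φp u y) v = Φp u v * Vmat ω R H lamp u v)
    (hLaxUm : ∀ u ∈ I, ∀ v ∈ J,
      mderiv (fun x => Φm x v) u = Φm u v * Umat ω Q H lamm u v)
    (hLaxVm : ∀ u ∈ I, ∀ v ∈ J,
      mderiv (fun y => Φm u y) v = Φm u v * Vmat ω R H lamm u v)
    (F N : ℝ → ℝ → Matrix (Fin 2) (Fin 2) ℝ)
    (hF : ∀ u v, F u v = Φp u v * (Φm u v)⁻¹)
    (hN : ∀ u v, N u v = -(Φp u v * kmat * (Φm u v)⁻¹)) :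
    ∀ u ∈ I, ∀ v ∈ J,
      form2 (F u v) (F u v) = -1 ∧
      form2 (mderiv (fun x => F x v) u) (mderiv (fun x => F x v) u) = 0 ∧
      form2 (mderiv (fun y => F u y) v) (mderiv (fun y => F u y) v) = 0 ∧
      2 * form2 (mderiv (fun x => F x v) u) (mderiv (fun y => F u y) v)
        = 4 * τ ^ 2 * Real.exp (ω u v) /
            ((1 - 4 * τ ^ 2 * (f u) ^ 2) * (1 - 4 * τ ^ 2 * (g v) ^ 2)) ∧
      form2 (N u v) (N u v) = 1 ∧
      form2 (N u v) (F u v) = 0 ∧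
      form2 (N u v) (mderiv (fun x => F x v) u) = 0 ∧
      form2 (N u v) (mderiv (fun y => F u y) v) = 0 := by
  intro u hu v hv
  have hD : I ×ˢ J ∈ 𝓝 (u, v) := (hIopen.prod hJopen).mem_nhds ⟨hu, hv⟩
  have hP i j := differentiableAt_slices_of_contDiffOn (hΦpsmooth i j) (by simp) hD
  have hM i j := differentiableAt_slices_of_contDiffOn (hΦmsmooth i j) (by simp) hD
  have hFu : mderiv (fun x => F x v) u
      = Φp u v * (Umat ω Q H lamp u v - Umat ω Q H lamm u v) * (Φm u v)⁻¹ := by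
    simp only [hF]
    exact mderiv_mul_inv_of_mderiv_eq_mul (fun i j => (hP i j).1) (fun i j => (hM i j).1)
      (hLaxUp u hu v hv) (hLaxUm u hu v hv) (trace_Umat ..)
      (eventually_of_mem (hIopen.mem_nhds hu) fun x hx => hΦmdet x hx v hv)
  have hFv : mderiv (fun y => F u y) v
      = Φp u v * (Vmat ω R H lamp u v - Vmat ω R H lamm u v) * (Φm u v)⁻¹ := by
    simp only [hF]
    exact mderiv_mul_inv_of_mderiv_eq_mul (fun i j => (hP i j).2) (fun i j => (hM i j).2)
      (hLaxVp u hu v hv) (hLaxVm u hu v hv) (trace_Vmat ..)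
      (eventually_of_mem (hJopen.mem_nhds hv) fun y hy => hΦmdet u hu y hy)
  have hFuv : F u v = Φp u v * 1 * (Φm u v)⁻¹ := by rw [hF, mul_one]
  have hNuv : N u v = Φp u v * !![1, 0; 0, -1] * (Φm u v)⁻¹ := by
    rw [hN, ← neg_mul, ← mul_neg, kmat]
    simp
  have hdet_inv : (Φm u v)⁻¹.det = 1 := by
    rw [det_nonsing_inv, hΦmdet u hu v hv, Ring.inverse_one]
  rw [hFu, hFv, hFuv, hNuv, Umat_sub_Umat, Vmat_sub_Vmat]
  simp only [form2_mul_mul, hΦpdet u hu v hv, hdet_inv, one_mul, one_fin_two, form2_fin_two_of]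
  refine ⟨by norm_num, by ring, by ring, ?_, by norm_num, by ring, by ring, by ring⟩
  have hexp : Real.exp (ω u v / 2) * Real.exp (ω u v / 2) = Real.exp (ω u v) := by
    rw [← Real.exp_add, add_halves]
  rw [← hexp, hH, hlamp, hlamm]
  linear_combination (-(Real.exp (ω u v / 2) * Real.exp (ω u v / 2)) / 4) *
    spectral_parameters_sub_mul_inv_sub (hfg u hu v hv) (hτf₁ u hu) (hτf₂ u hu) (hτg₁ v hv)
      (hτg₂ v hv)

/-- immersion formula in the anti de Sitter space `H³₁`:
for solutions `Φ⁺, Φ⁻` of the Lax pairs with spectral parameters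
`λ₊ = (1−2τg)/(1+2τf)`, `λ₋ = (1+2τg)/(1−2τf)`, the map `F = Φ⁺(Φ⁻)⁻¹` takes values in
`H³₁ = {⟨X,X⟩ = −1}`, is conformal with `2⟨F_u,F_v⟩ = 4τ²e^ω/((1−4τ²f²)(1−4τ²g²))`,
and `N = −Φ⁺k′(Φ⁻)⁻¹` is a unit normal. -/
theorem statement3
    (I J : Set ℝ)
    (hIopen : IsOpen I) (hIint : I.OrdConnected)
    (hJopen : IsOpen J) (hJint : J.OrdConnected)
    (f g : ℝ → ℝ)
    (hf : ContDiffOn ℝ (⊤ : ℕ∞) f I) (hg : ContDiffOn ℝ (⊤ : ℕ∞) g J)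
    (hfg : ∀ u ∈ I, ∀ v ∈ J, f u + g v ≠ 0)
    (τ : ℝ) (hτ : τ ≠ 0)
    (hτf₁ : ∀ u ∈ I, 1 + 2 * τ * f u ≠ 0) (hτf₂ : ∀ u ∈ I, 1 - 2 * τ * f u ≠ 0)
    (hτg₁ : ∀ v ∈ J, 1 + 2 * τ * g v ≠ 0) (hτg₂ : ∀ v ∈ J, 1 - 2 * τ * g v ≠ 0)
    (H lamp lamm : ℝ → ℝ → ℝ)
    (hH : ∀ u v, H u v = 1 / (f u + g v))
    (hlamp : ∀ u v, lamp u v = (1 - 2 * τ * g v) / (1 + 2 * τ * f u))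
    (hlamm : ∀ u v, lamm u v = (1 + 2 * τ * g v) / (1 - 2 * τ * f u))
    (ω Q R : ℝ → ℝ → ℝ)
    (hω : Smooth2 ω (I ×ˢ J)) (hQ : Smooth2 Q (I ×ˢ J)) (hR : Smooth2 R (I ×ˢ J))
    (hGauss : ∀ u ∈ I, ∀ v ∈ J, GaussEq 0 ω Q R H u v)
    (hCodazzi : ∀ u ∈ I, ∀ v ∈ J, CodazziEq ω Q R H u v)
    (Φp Φm : ℝ → ℝ → Matrix (Fin 2) (Fin 2) ℝ)
    (hΦpsmooth : ∀ i j, ContDiffOn ℝ (⊤ : ℕ∞) (fun p : ℝ × ℝ => Φp p.1 p.2 i j) (I ×ˢ J))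
    (hΦmsmooth : ∀ i j, ContDiffOn ℝ (⊤ : ℕ∞) (fun p : ℝ × ℝ => Φm p.1 p.2 i j) (I ×ˢ J))
    (hΦpdet : ∀ u ∈ I, ∀ v ∈ J, (Φp u v).det = 1)
    (hΦmdet : ∀ u ∈ I, ∀ v ∈ J, (Φm u v).det = 1)
    (hLaxUp : ∀ u ∈ I, ∀ v ∈ J,
      mderiv (fun x => Φp x v) u = Φp u v * Umat ω Q H lamp u v)
    (hLaxVp : ∀ u ∈ I, ∀ v ∈ J,
      mderiv (fun y => Φp u y) v = Φp u v * Vmat ω R H lamp u v)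
    (hLaxUm : ∀ u ∈ I, ∀ v ∈ J,
      mderiv (fun x => Φm x v) u = Φm u v * Umat ω Q H lamm u v)
    (hLaxVm : ∀ u ∈ I, ∀ v ∈ J,
      mderiv (fun y => Φm u y) v = Φm u v * Vmat ω R H lamm u v)
    (F N : ℝ → ℝ → Matrix (Fin 2) (Fin 2) ℝ)
    (hF : ∀ u v, F u v = Φp u v * (Φm u v)⁻¹)
    (hN : ∀ u v, N u v = -(Φp u v * kmat * (Φm u v)⁻¹)) :
    ∀ u ∈ I, ∀ v ∈ J,
      form2 (F u v) (F u v) = -1 ∧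
      form2 (mderiv (fun x => F x v) u) (mderiv (fun x => F x v) u) = 0 ∧
      form2 (mderiv (fun y => F u y) v) (mderiv (fun y => F u y) v) = 0 ∧
      2 * form2 (mderiv (fun x => F x v) u) (mderiv (fun y => F u y) v)
        = 4 * τ ^ 2 * Real.exp (ω u v) /
            ((1 - 4 * τ ^ 2 * (f u) ^ 2) * (1 - 4 * τ ^ 2 * (g v) ^ 2)) ∧
      form2 (N u v) (N u v) = 1 ∧
      form2 (N u v) (F u v) = 0 ∧
      form2 (N u v) (mderiv (fun x => F x v) u) = 0 ∧
      form2 (N u v) (mderiv (fun y => F u y) v) = 0 :=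
  statement3_general I J hIopen hJopen f g hfg τ hτf₁ hτf₂ hτg₁ hτg₂ H lamp lamm hH hlamp hlamm ω Q
    R Φp Φm hΦpsmooth hΦmsmooth hΦpdet hΦmdet hLaxUp hLaxVp hLaxUm hLaxVm F N hF hN
end
end

section
/- Let ε ∈ {−1, 1}, ϑ ∈ ℝ with ϑ ≠ 0, let I, J ⊆ ℝ be open intervals, D = I × J, and let ω, q : D → ℝ be smooth and g : J → ℝ be smooth with g and g′ nowhere zero. Suppose that H(u,v) = 1/g(v), Q = (q + ϑ)/2, R = ε(q − ϑ)/2 satisfy the Gauss equation (G₀) and the Codazzi equations (C₀) on D. Then: (i) ω_uv = 0 on D (the surface is flat); (ii) ε(q² − ϑ²) > 0 on D (real distinct principal curvatures); (iii) q is independent of v; and (iv) there exist C ∈ ℝ∖{0}, α ∈ ℝ∖{0}, β ∈ ℝ such that g(v) = C e^{αv} on J, and moreover if ε = 1 then q(u,v) = μ ϑ cosh(αu + β) for some μ ∈ {−1, 1}, while if ε = −1 then q(u,v) = ϑ sin(αu + β). -/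
noncomputable section

/-!
The first Codazzi equation gives `q_v = 0`, and the second one gives `e^ω g' = -ε q_u g²`. Thus
`e^ω` is a product of a function of `u` and a function of `v`, so `ω_uv = 0`, and the Gauss
equation reduces to `e^{2ω} = ε (q² - ϑ²) g²`. Eliminating `e^ω` separates the variables:
`ε (q² - ϑ²) g'² = q_u² g²`. Hence `g'/g`, being continuous with constant square on an interval, is
a constant `α`, and `q_u² = ε α² (q² - ϑ²)`. Differentiating this first integral gives the linear
equation `q_uu = ε α² q`, and uniqueness for linear ODEs identifies `q` with `ϑ sin (αu + β)` or
`±ϑ cosh (αu + β)`, the phase being read off from the first integral at one point.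
-/

open Set Real

theorem eqOn_of_hasDerivAt_eq_clm {E : Type*} [NormedAddCommGroup E] [NormedSpace ℝ E]
    {s : Set ℝ} (hs : s.OrdConnected) (L : E →L[ℝ] E) {f g : ℝ → E}
    (hf : ∀ t ∈ s, HasDerivAt f (L (f t)) t) (hg : ∀ t ∈ s, HasDerivAt g (L (g t)) t)
    {t₀ : ℝ} (ht₀ : t₀ ∈ s) (heq : f t₀ = g t₀) : EqOn f g s := by
  intro t ht
  rcases le_total t₀ t with h | h
  · have hsub : Icc t₀ t ⊆ s := hs.out ht₀ ht
    exact ODE_solution_unique (v := fun _ => L) (fun _ => L.lipschitz)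
      (HasDerivAt.continuousOn fun x hx => hf x (hsub hx))
      (fun x hx => (hf x (hsub (Ico_subset_Icc_self hx))).hasDerivWithinAt)
      (HasDerivAt.continuousOn fun x hx => hg x (hsub hx))
      (fun x hx => (hg x (hsub (Ico_subset_Icc_self hx))).hasDerivWithinAt) heq ⟨h, le_rfl⟩
  · have hsub : Icc t t₀ ⊆ s := hs.out ht ht₀
    exact ODE_solution_unique_of_mem_Icc_left (v := fun _ => L) (s := fun _ => univ)
      (fun _ _ => L.lipschitz.lipschitzOnWith)
      (HasDerivAt.continuousOn fun x hx => hf x (hsub hx))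
      (fun x hx => (hf x (hsub (Ioc_subset_Icc_self hx))).hasDerivWithinAt) (fun _ _ => trivial)
      (HasDerivAt.continuousOn fun x hx => hg x (hsub hx))
      (fun x hx => (hg x (hsub (Ioc_subset_Icc_self hx))).hasDerivWithinAt) (fun _ _ => trivial)
      heq ⟨le_rfl, h⟩

theorem eqOn_of_hasDerivAt_eq_mul {s : Set ℝ} (hs : s.OrdConnected) (c : ℝ) {f g : ℝ → ℝ}
    (hf : ∀ t ∈ s, HasDerivAt f (c * f t) t) (hg : ∀ t ∈ s, HasDerivAt g (c * g t) t)
    {t₀ : ℝ} (ht₀ : t₀ ∈ s) (heq : f t₀ = g t₀) : EqOn f g s :=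
  eqOn_of_hasDerivAt_eq_clm hs (c • ContinuousLinearMap.id ℝ ℝ) (by simpa using hf)
    (by simpa using hg) ht₀ heq

theorem eqOn_of_hasDerivAt_deriv_eq_mul {s : Set ℝ} (hs : s.OrdConnected) (c : ℝ)
    {f f' g g' : ℝ → ℝ} (hf : ∀ t ∈ s, HasDerivAt f (f' t) t)
    (hf' : ∀ t ∈ s, HasDerivAt f' (c * f t) t) (hg : ∀ t ∈ s, HasDerivAt g (g' t) t)
    (hg' : ∀ t ∈ s, HasDerivAt g' (c * g t) t) {t₀ : ℝ} (ht₀ : t₀ ∈ s)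
    (heq : f t₀ = g t₀) (heq' : f' t₀ = g' t₀) : EqOn f g s := by
  let L : ℝ × ℝ →L[ℝ] ℝ × ℝ :=
    (ContinuousLinearMap.snd ℝ ℝ ℝ).prod (c • ContinuousLinearMap.fst ℝ ℝ ℝ)
  have key := eqOn_of_hasDerivAt_eq_clm hs L (f := fun t => (f t, f' t))
    (g := fun t => (g t, g' t)) (fun t ht => (hf t ht).prodMk (hf' t ht))
    (fun t ht => (hg t ht).prodMk (hg' t ht)) ht₀ (Prod.ext heq heq')
  exact fun t ht => congrArg Prod.fst (key ht)

theorem IsPreconnected.eq_of_sq_eq_sq {s : Set ℝ} (hs : IsPreconnected s) {f : ℝ → ℝ}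
    (hf : ContinuousOn f s) {x₀ : ℝ} (hx₀ : x₀ ∈ s) (hf₀ : f x₀ ≠ 0)
    (hsq : ∀ x ∈ s, f x ^ 2 = f x₀ ^ 2) : ∀ x ∈ s, f x = f x₀ := by
  rcases hs.eq_or_eq_neg_of_sq_eq hf continuousOn_const (fun x hx => hsq x hx)
    (fun _ => hf₀) with h | h
  · exact h
  · have := h hx₀
    simp only [Pi.neg_apply] at this
    exact absurd (by linarith : f x₀ = 0) hf₀

theorem second_deriv_eq_mul_of_sq_deriv_eq {s : Set ℝ} (hs : IsOpen s) {f f' f'' : ℝ → ℝ} {a b : ℝ}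
    (hf : ∀ x ∈ s, HasDerivAt f (f' x) x) (hf' : ∀ x ∈ s, HasDerivAt f' (f'' x) x)
    (hsq : ∀ x ∈ s, f' x ^ 2 = a * f x ^ 2 + b) (hne : ∀ x ∈ s, f' x ≠ 0) :
    ∀ x ∈ s, f'' x = a * f x := by
  intro x hx
  have hlhs : HasDerivAt (fun y => f' y ^ 2) (2 * f' x * f'' x) x := by
    simpa using (hf' x hx).fun_pow 2
  have hrhs : HasDerivAt (fun y => f' y ^ 2) (a * (2 * f x * f' x)) x := by
    have := (((hf x hx).fun_pow 2).const_mul a).add_const b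
    refine (this.congr_of_eventuallyEq ?_).congr_deriv (by simp)
    exact Filter.eventuallyEq_of_mem (hs.mem_nhds hx) hsq
  have h := hlhs.unique hrhs
  have : 2 * f' x * (f'' x - a * f x) = 0 := by linear_combination h
  have := (mul_eq_zero.mp this).resolve_left (mul_ne_zero two_ne_zero (hne x hx))
  linarith

theorem exists_sin_cos_eq {x y : ℝ} (h : x ^ 2 + y ^ 2 = 1) : ∃ θ, sin θ = x ∧ cos θ = y := by
  have hz : ‖(⟨y, x⟩ : ℂ)‖ = 1 := by simp [Complex.norm_eq_sqrt_sq_add_sq, add_comm, h]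
  refine ⟨Complex.arg ⟨y, x⟩, ?_, ?_⟩
  · simpa [hz] using Complex.norm_mul_sin_arg ⟨y, x⟩
  · simpa [hz] using Complex.norm_mul_cos_arg ⟨y, x⟩

theorem exists_cosh_sinh_eq {x y : ℝ} (h : x ^ 2 - y ^ 2 = 1) :
    ∃ μ θ : ℝ, (μ = -1 ∨ μ = 1) ∧ μ * cosh θ = x ∧ μ * sinh θ = y := by
  have hcosh : cosh (arsinh y) = |x| := by
    rw [cosh_arsinh, ← sqrt_sq_eq_abs]; congr 1; linarith
  rcases le_or_gt 0 x with hx | hx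
  · exact ⟨1, arsinh y, Or.inr rfl, by simp [hcosh, abs_of_nonneg hx], by simp⟩
  · exact ⟨-1, arsinh (-y), Or.inl rfl, by simp [hcosh, abs_of_neg hx], by simp⟩

theorem hasDerivAt_mul_add (α β t : ℝ) : HasDerivAt (fun x => α * x + β) α t := by
  simpa using ((hasDerivAt_id t).const_mul α).add_const β

theorem exists_eq_mul_sin_of_hasDerivAt {s : Set ℝ} (hs : s.OrdConnected) {f f' : ℝ → ℝ}
    {α ϑ : ℝ} (hα : α ≠ 0) (hϑ : ϑ ≠ 0) (hf : ∀ t ∈ s, HasDerivAt f (f' t) t)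
    (hf' : ∀ t ∈ s, HasDerivAt f' (-α ^ 2 * f t) t) {t₀ : ℝ} (ht₀ : t₀ ∈ s)
    (h₀ : f' t₀ ^ 2 = α ^ 2 * (ϑ ^ 2 - f t₀ ^ 2)) :
    ∃ β, ∀ t ∈ s, f t = ϑ * sin (α * t + β) := by
  obtain ⟨θ, hsin, hcos⟩ := exists_sin_cos_eq (x := f t₀ / ϑ) (y := f' t₀ / (α * ϑ)) (by
    field_simp; linear_combination h₀)
  refine ⟨θ - α * t₀, eqOn_of_hasDerivAt_deriv_eq_mul hs (-α ^ 2) hf hf'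
    (g' := fun t => ϑ * α * cos (α * t + (θ - α * t₀))) (fun t _ => ?_) (fun t _ => ?_) ht₀ ?_ ?_⟩
  · exact ((hasDerivAt_mul_add α _ t).sin.const_mul ϑ).congr_deriv (by ring)
  · exact ((hasDerivAt_mul_add α _ t).cos.const_mul (ϑ * α)).congr_deriv (by ring)
  · simp only [add_sub_cancel, hsin]; field_simp
  · simp only [add_sub_cancel, hcos]; field_simp

theorem exists_eq_mul_cosh_of_hasDerivAt {s : Set ℝ} (hs : s.OrdConnected) {f f' : ℝ → ℝ}
    {α ϑ : ℝ} (hα : α ≠ 0) (hϑ : ϑ ≠ 0) (hf : ∀ t ∈ s, HasDerivAt f (f' t) t)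
    (hf' : ∀ t ∈ s, HasDerivAt f' (α ^ 2 * f t) t) {t₀ : ℝ} (ht₀ : t₀ ∈ s)
    (h₀ : f' t₀ ^ 2 = α ^ 2 * (f t₀ ^ 2 - ϑ ^ 2)) :
    ∃ μ β, (μ = -1 ∨ μ = 1) ∧ ∀ t ∈ s, f t = μ * ϑ * cosh (α * t + β) := by
  obtain ⟨μ, θ, hμ, hcosh, hsinh⟩ :=
    exists_cosh_sinh_eq (x := f t₀ / ϑ) (y := f' t₀ / (α * ϑ)) (by
      field_simp; linear_combination -h₀)
  refine ⟨μ, θ - α * t₀, hμ, eqOn_of_hasDerivAt_deriv_eq_mul hs (α ^ 2) hf hf'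
    (g' := fun t => μ * ϑ * α * sinh (α * t + (θ - α * t₀))) (fun t _ => ?_) (fun t _ => ?_)
    ht₀ ?_ ?_⟩
  · exact ((hasDerivAt_mul_add α _ t).cosh.const_mul (μ * ϑ)).congr_deriv (by ring)
  · exact ((hasDerivAt_mul_add α _ t).sinh.const_mul (μ * ϑ * α)).congr_deriv (by ring)
  · simp only [add_sub_cancel]; rw [mul_right_comm, hcosh]; field_simp
  · simp only [add_sub_cancel]; rw [mul_right_comm, mul_right_comm μ, hsinh]; field_simp

theorem ContDiffOn.hasDerivAt_deriv {f : ℝ → ℝ} {s : Set ℝ} {n : WithTop ℕ∞}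
    (hf : ContDiffOn ℝ n f s) (hs : IsOpen s) (hn : n ≠ 0) {x : ℝ} (hx : x ∈ s) :
    HasDerivAt f (deriv f x) x :=
  ((hf.differentiableOn hn).differentiableAt (hs.mem_nhds hx)).hasDerivAt

theorem Smooth2.contDiffOn_left {f : ℝ → ℝ → ℝ} {I J : Set ℝ} (hf : Smooth2 f (I ×ˢ J))
    {v : ℝ} (hv : v ∈ J) : ContDiffOn ℝ (⊤ : ℕ∞) (fun u => f u v) I :=
  hf.comp (contDiffOn_id.prodMk contDiffOn_const) fun _ hu => ⟨hu, hv⟩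

theorem Smooth2.contDiffOn_right {f : ℝ → ℝ → ℝ} {I J : Set ℝ} (hf : Smooth2 f (I ×ˢ J))
    {u : ℝ} (hu : u ∈ I) : ContDiffOn ℝ (⊤ : ℕ∞) (f u) J :=
  hf.comp (contDiffOn_const.prodMk contDiffOn_id) fun _ hv => ⟨hu, hv⟩

theorem Smooth2.eq_of_pd2_eq_zero {f : ℝ → ℝ → ℝ} {I J : Set ℝ} (hf : Smooth2 f (I ×ˢ J))
    (hJ : IsOpen J) (hJc : IsPreconnected J) (h : ∀ u ∈ I, ∀ v ∈ J, pd2 f u v = 0)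
    {u v v' : ℝ} (hu : u ∈ I) (hv : v ∈ J) (hv' : v' ∈ J) : f u v = f u v' :=
  hJ.is_const_of_deriv_eq_zero hJc ((hf.contDiffOn_right hu).differentiableOn (by simp))
    (fun y hy => h u hu y hy) hv hv'

theorem pd1_eq_deriv_of_eqOn {f : ℝ → ℝ → ℝ} {φ : ℝ → ℝ} {I : Set ℝ} (hI : IsOpen I) {u v : ℝ}
    (hu : u ∈ I) (h : ∀ x ∈ I, f x v = φ x) : pd1 f u v = deriv φ u :=
  (Filter.eventuallyEq_of_mem (hI.mem_nhds hu) h).deriv_eq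

theorem pd2_pd1_eq_zero_of_eq_add {ω : ℝ → ℝ → ℝ} {a b : ℝ → ℝ} {I J : Set ℝ} (hI : IsOpen I)
    (hJ : IsOpen J) (h : ∀ u ∈ I, ∀ v ∈ J, ω u v = a u + b v) {u v : ℝ} (hu : u ∈ I)
    (hv : v ∈ J) : pd2 (pd1 ω) u v = 0 := by
  have hpd1 : ∀ y ∈ J, pd1 ω u y = deriv a u := fun y hy => by
    rw [pd1_eq_deriv_of_eqOn hI hu fun x hx => h x hx y hy, deriv_add_const]
  rw [pd2, (Filter.eventuallyEq_of_mem (hJ.mem_nhds hv) hpd1).deriv_eq, deriv_const]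

theorem pd2_pd1_eq_zero_of_exp_eq_mul {ω : ℝ → ℝ → ℝ} {a b : ℝ → ℝ} {I J : Set ℝ}
    (hI : IsOpen I) (hJ : IsOpen J) (h : ∀ u ∈ I, ∀ v ∈ J, exp (ω u v) = a u * b v) {u v : ℝ}
    (hu : u ∈ I) (hv : v ∈ J) : pd2 (pd1 ω) u v = 0 := by
  refine pd2_pd1_eq_zero_of_eq_add hI hJ (a := fun u => log |a u|) (b := fun v => log |b v|)
    (fun u hu v hv => ?_) hu hv
  have hab : |a u| * |b v| = exp (ω u v) := by rw [← abs_mul, ← h u hu v hv, abs_of_pos (exp_pos _)]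
  have hpos : 0 < |a u| * |b v| := hab ▸ exp_pos _
  rw [← log_mul (left_ne_zero_of_mul hpos.ne') (right_ne_zero_of_mul hpos.ne'), hab, log_exp]

section IsothermicHopf

variable {ω q : ℝ → ℝ → ℝ} {g : ℝ → ℝ} {ε ϑ u v : ℝ}

theorem CodazziEq.pd2_eq_zero
    (h : CodazziEq ω (fun u v => (q u v + ϑ) / 2) (fun u v => ε * (q u v - ϑ) / 2)
      (fun _ v => 1 / g v) u v) : pd2 q u v = 0 := by
  have h1 := h.1
  simp only [pd1, pd2, deriv_const, deriv_div_const, deriv_add_const] at h1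
  have : exp (-ω u v) * pd2 q u v = 0 := by rw [pd2]; linear_combination -h1
  exact (mul_eq_zero.mp this).resolve_left (exp_pos _).ne'

theorem CodazziEq.exp_mul_deriv
    (h : CodazziEq ω (fun u v => (q u v + ϑ) / 2) (fun u v => ε * (q u v - ϑ) / 2)
      (fun _ v => 1 / g v) u v) {g' : ℝ} (hg : HasDerivAt g g' v) (hg₀ : g v ≠ 0) :
    exp (ω u v) * g' = -ε * pd1 q u v * g v ^ 2 := by
  have h2 := h.2
  have hinv : pd2 (fun _ v => 1 / g v) u v = -g' / g v ^ 2 := by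
    simpa [pd2] using (hg.fun_inv hg₀).deriv
  simp only [pd1, hinv, deriv_div_const, deriv_const_mul_field, deriv_sub_const] at h2
  rw [exp_neg] at h2
  field_simp at h2
  rw [pd1]
  linear_combination -h2

theorem GaussEq.exp_sq
    (h : GaussEq 0 ω (fun u v => (q u v + ϑ) / 2) (fun u v => ε * (q u v - ϑ) / 2)
      (fun _ v => 1 / g v) u v) (hflat : pd2 (pd1 ω) u v = 0) (hg₀ : g v ≠ 0) :
    exp (ω u v) ^ 2 = ε * (q u v ^ 2 - ϑ ^ 2) * g v ^ 2 := by
  rw [GaussEq, hflat, exp_neg] at h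
  field_simp at h
  linear_combination h

end IsothermicHopf

theorem IsPreconnected.exists_deriv_eq_mul_of_sq_mul_eq {I J : Set ℝ} (hJ : IsPreconnected J)
    {g g' P Φ' : ℝ → ℝ} (hcont : ContinuousOn (fun v => g' v / g v) J)
    (hg₀ : ∀ v ∈ J, g v ≠ 0) (hsep : ∀ u ∈ I, ∀ v ∈ J, P u * g' v ^ 2 = Φ' u ^ 2 * g v ^ 2)
    {u₀ v₀ : ℝ} (hu₀ : u₀ ∈ I) (hv₀ : v₀ ∈ J) (hP₀ : P u₀ ≠ 0) (hg'₀ : g' v₀ ≠ 0) :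
    ∃ α ≠ 0, (∀ v ∈ J, g' v = α * g v) ∧ ∀ u ∈ I, Φ' u ^ 2 = α ^ 2 * P u := by
  have hratio := hJ.eq_of_sq_eq_sq hcont hv₀ (div_ne_zero hg'₀ (hg₀ v₀ hv₀)) fun v hv => by
    have h : P u₀ * (g' v ^ 2 * g v₀ ^ 2 - g' v₀ ^ 2 * g v ^ 2) = 0 := by
      linear_combination g v₀ ^ 2 * hsep u₀ hu₀ v hv - g v ^ 2 * hsep u₀ hu₀ v₀ hv₀
    rw [div_pow, div_pow, div_eq_div_iff (pow_ne_zero 2 (hg₀ v hv)) (pow_ne_zero 2 (hg₀ v₀ hv₀))]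
    linear_combination (mul_eq_zero.mp h).resolve_left hP₀
  set α := g' v₀ / g v₀
  have hg' : ∀ v ∈ J, g' v = α * g v := fun v hv => by
    rw [← hratio v hv, div_mul_cancel₀ _ (hg₀ v hv)]
  refine ⟨α, div_ne_zero hg'₀ (hg₀ v₀ hv₀), hg', fun u hu => ?_⟩
  have h := hsep u hu v₀ hv₀
  rw [hg' v₀ hv₀] at h
  exact mul_right_cancel₀ (pow_ne_zero 2 (hg₀ v₀ hv₀)) (by linear_combination -h)

theorem eq_mul_exp_of_hasDerivAt {s : Set ℝ} (hs : s.OrdConnected) {g : ℝ → ℝ} {α : ℝ}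
    (hg : ∀ t ∈ s, HasDerivAt g (α * g t) t) {t₀ : ℝ} (ht₀ : t₀ ∈ s) :
    ∀ t ∈ s, g t = g t₀ * exp (-(α * t₀)) * exp (α * t) := by
  refine eqOn_of_hasDerivAt_eq_mul hs α hg (fun t _ => ?_) ht₀ ?_
  · exact ((((hasDerivAt_id' t).const_mul α).exp).const_mul _).congr_deriv (by ring)
  · rw [mul_assoc, ← exp_add, neg_add_cancel, exp_zero, mul_one]

theorem flat_and_separated_of_gaussEq_codazziEq {ε ϑ : ℝ} (hε : ε ^ 2 = 1) {I J : Set ℝ}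
    (hI : IsOpen I) (hJ : IsOpen J) {ω q : ℝ → ℝ → ℝ} {g g' Φ : ℝ → ℝ}
    (hqΦ : ∀ u ∈ I, ∀ v ∈ J, q u v = Φ u) (hg : ∀ v ∈ J, HasDerivAt g (g' v) v)
    (hg₀ : ∀ v ∈ J, g v ≠ 0) (hg'₀ : ∀ v ∈ J, g' v ≠ 0)
    (hGauss : ∀ u ∈ I, ∀ v ∈ J,
      GaussEq 0 ω (fun u v => (q u v + ϑ) / 2) (fun u v => ε * (q u v - ϑ) / 2)
        (fun _ v => 1 / g v) u v)
    (hCodazzi : ∀ u ∈ I, ∀ v ∈ J,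
      CodazziEq ω (fun u v => (q u v + ϑ) / 2) (fun u v => ε * (q u v - ϑ) / 2)
        (fun _ v => 1 / g v) u v) :
    (∀ u ∈ I, ∀ v ∈ J, pd2 (pd1 ω) u v = 0) ∧
    (∀ u ∈ I, ∀ v ∈ J, 0 < ε * (Φ u ^ 2 - ϑ ^ 2)) ∧
    ∀ u ∈ I, ∀ v ∈ J, ε * (Φ u ^ 2 - ϑ ^ 2) * g' v ^ 2 = deriv Φ u ^ 2 * g v ^ 2 := by
  have hcod : ∀ u ∈ I, ∀ v ∈ J, exp (ω u v) * g' v = -ε * deriv Φ u * g v ^ 2 := by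
    intro u hu v hv
    rw [(hCodazzi u hu v hv).exp_mul_deriv (hg v hv) (hg₀ v hv),
      pd1_eq_deriv_of_eqOn hI hu fun x hx => hqΦ x hx v hv]
  have hsplit : ∀ u ∈ I, ∀ v ∈ J,
      exp (ω u v) = (-ε * deriv Φ u) * (g v ^ 2 / g' v) := fun u hu v hv => by
    rw [mul_div_assoc', eq_div_iff (hg'₀ v hv), hcod u hu v hv]
  have hflat : ∀ u ∈ I, ∀ v ∈ J, pd2 (pd1 ω) u v = 0 := fun u hu v hv =>
    pd2_pd1_eq_zero_of_exp_eq_mul hI hJ hsplit hu hv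
  have hgauss : ∀ u ∈ I, ∀ v ∈ J, exp (ω u v) ^ 2 = ε * (Φ u ^ 2 - ϑ ^ 2) * g v ^ 2 :=
    fun u hu v hv => hqΦ u hu v hv ▸ (hGauss u hu v hv).exp_sq (hflat u hu v hv) (hg₀ v hv)
  refine ⟨hflat, fun u hu v hv => ?_, fun u hu v hv => ?_⟩
  · have h := pow_pos (exp_pos (ω u v)) 2
    rw [hgauss u hu v hv] at h
    exact pos_of_mul_pos_left h (sq_nonneg _)
  · refine mul_right_cancel₀ (pow_ne_zero 2 (hg₀ v hv)) ?_
    linear_combination (-g' v ^ 2) * hgauss u hu v hv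
      + (exp (ω u v) * g' v - ε * deriv Φ u * g v ^ 2) * hcod u hu v hv
      + deriv Φ u ^ 2 * g v ^ 4 * hε

theorem exists_eq_sin_or_cosh_of_sq_deriv_eq {s : Set ℝ} (hs : IsOpen s) (hs' : s.OrdConnected)
    {f : ℝ → ℝ} (hf : ContDiffOn ℝ 2 f s) {ε α ϑ : ℝ} (hε : ε = -1 ∨ ε = 1) (hα : α ≠ 0)
    (hϑ : ϑ ≠ 0) (hpos : ∀ t ∈ s, 0 < ε * (f t ^ 2 - ϑ ^ 2))
    (hsq : ∀ t ∈ s, deriv f t ^ 2 = α ^ 2 * (ε * (f t ^ 2 - ϑ ^ 2))) {t₀ : ℝ} (ht₀ : t₀ ∈ s) :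
    ∃ β, (ε = 1 → ∃ μ : ℝ, (μ = -1 ∨ μ = 1) ∧ ∀ t ∈ s, f t = μ * ϑ * cosh (α * t + β)) ∧
      (ε = -1 → ∀ t ∈ s, f t = ϑ * sin (α * t + β)) := by
  have hf' := fun t ht => hf.hasDerivAt_deriv hs (by simp) (x := t) ht
  have hf'' := fun t ht =>
    (hf.deriv_of_isOpen hs (m := 1) (by norm_num)).hasDerivAt_deriv hs (by simp) (x := t) ht
  have hode := second_deriv_eq_mul_of_sq_deriv_eq hs hf' hf'' (a := ε * α ^ 2)
    (b := -(ε * α ^ 2 * ϑ ^ 2)) (fun t ht => by rw [hsq t ht]; ring) fun t ht =>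
      (pow_ne_zero_iff two_ne_zero).mp ((hsq t ht).trans_ne (by have := hpos t ht; positivity))
  rcases hε with rfl | rfl
  · obtain ⟨β, hβ⟩ := exists_eq_mul_sin_of_hasDerivAt hs' hα hϑ hf'
      (fun t ht => (hf'' t ht).congr_deriv (by rw [hode t ht]; ring)) ht₀
      (by rw [hsq t₀ ht₀]; ring)
    exact ⟨β, by norm_num, fun _ => hβ⟩
  · obtain ⟨μ, β, hμ, hβ⟩ := exists_eq_mul_cosh_of_hasDerivAt hs' hα hϑ hf'
      (fun t ht => (hf'' t ht).congr_deriv (by rw [hode t ht]; ring)) ht₀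
      (by rw [hsq t₀ ht₀]; ring)
    exact ⟨β, fun _ => ⟨μ, hμ, hβ⟩, by norm_num⟩

theorem statement7_general
    (ε ϑ : ℝ) (hε : ε = -1 ∨ ε = 1) (hϑ : ϑ ≠ 0)
    (I J : Set ℝ)
    (hIopen : IsOpen I) (hIint : I.OrdConnected) (hIne : I.Nonempty)
    (hJopen : IsOpen J) (hJint : J.OrdConnected) (hJne : J.Nonempty)
    (ω q : ℝ → ℝ → ℝ) (g : ℝ → ℝ)
    (hq : Smooth2 q (I ×ˢ J))
    (hg : ContDiffOn ℝ (⊤ : ℕ∞) g J)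
    (hg0 : ∀ v ∈ J, g v ≠ 0)
    (hg'0 : ∀ v ∈ J, deriv g v ≠ 0)
    (hGauss : ∀ u ∈ I, ∀ v ∈ J,
      GaussEq 0 ω (fun u v => (q u v + ϑ) / 2) (fun u v => ε * (q u v - ϑ) / 2)
        (fun u v => 1 / g v) u v)
    (hCodazzi : ∀ u ∈ I, ∀ v ∈ J,
      CodazziEq ω (fun u v => (q u v + ϑ) / 2) (fun u v => ε * (q u v - ϑ) / 2)
        (fun u v => 1 / g v) u v) :
    (∀ u ∈ I, ∀ v ∈ J, pd2 (pd1 ω) u v = 0) ∧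
    (∀ u ∈ I, ∀ v ∈ J, 0 < ε * ((q u v) ^ 2 - ϑ ^ 2)) ∧
    (∀ u ∈ I, ∀ v ∈ J, ∀ v' ∈ J, q u v = q u v') ∧
    (∃ C α β : ℝ, C ≠ 0 ∧ α ≠ 0 ∧
      (∀ v ∈ J, g v = C * Real.exp (α * v)) ∧
      (ε = 1 → ∃ μ : ℝ, (μ = -1 ∨ μ = 1) ∧
        ∀ u ∈ I, ∀ v ∈ J, q u v = μ * ϑ * Real.cosh (α * u + β)) ∧
      (ε = -1 → ∀ u ∈ I, ∀ v ∈ J, q u v = ϑ * Real.sin (α * u + β))) := by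
  obtain ⟨u₀, hu₀⟩ := hIne
  obtain ⟨v₀, hv₀⟩ := hJne
  have hqv : ∀ u ∈ I, ∀ v ∈ J, ∀ v' ∈ J, q u v = q u v' := fun u hu v hv v' hv' =>
    hq.eq_of_pd2_eq_zero hJopen hJint.isPreconnected
      (fun u hu v hv => (hCodazzi u hu v hv).pd2_eq_zero) hu hv hv'
  set Φ := fun u => q u v₀
  have hqΦ : ∀ u ∈ I, ∀ v ∈ J, q u v = Φ u := fun u hu v hv => hqv u hu v hv v₀ hv₀
  have hgd : ∀ v ∈ J, HasDerivAt g (deriv g v) v := fun v hv =>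
    hg.hasDerivAt_deriv hJopen (by simp) hv
  obtain ⟨hflat, hreal, hsep⟩ := flat_and_separated_of_gaussEq_codazziEq
    (by rcases hε with rfl | rfl <;> norm_num) hIopen hJopen hqΦ hgd hg0 hg'0 hGauss hCodazzi
  have hg'cont : ContinuousOn (deriv g) J :=
    (hg.deriv_of_isOpen hJopen (m := 0) (by simp)).continuousOn
  obtain ⟨α, hα, hgα, hΦα⟩ := hJint.isPreconnected.exists_deriv_eq_mul_of_sq_mul_eq
    (hg'cont.div hg.continuousOn hg0) hg0 hsep hu₀ hv₀ (hreal u₀ hu₀ v₀ hv₀).ne' (hg'0 v₀ hv₀)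
  obtain ⟨β, hcosh, hsin⟩ := exists_eq_sin_or_cosh_of_sq_deriv_eq hIopen hIint
    ((hq.contDiffOn_left hv₀).of_le (WithTop.coe_le_coe.mpr le_top)) hε hα hϑ
    (fun u hu => hreal u hu v₀ hv₀) hΦα hu₀
  refine ⟨hflat, fun u hu v hv => hqΦ u hu v hv ▸ hreal u hu v hv, hqv, _, α, β,
    mul_ne_zero (hg0 v₀ hv₀) (exp_pos _).ne', hα,
    eq_mul_exp_of_hasDerivAt hJint (fun v hv => hgα v hv ▸ hgd v hv) hv₀, fun h1 => ?_,
    fun h1 u hu v hv => (hqΦ u hu v hv).trans (hsin h1 u hu)⟩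
  obtain ⟨μ, hμ, hΦ⟩ := hcosh h1
  exact ⟨μ, hμ, fun u hu v hv => (hqΦ u hu v hv).trans (hΦ u hu)⟩

/-- Theorem 5.4: an `(ε,ϑ)`-isothermic timelike surface (`ϑ ≠ 0`,
`Q = (q+ϑ)/2`, `R = ε(q−ϑ)/2`) with Lorentz anti-holomorphic inverse mean curvature
`1/H = g(v)` is flat, has real distinct principal curvatures, `q` depends only on `u`,
and `g(v) = Ce^{αv}` with `q = μϑcosh(αu+β)` if `ε = 1`, `q = ϑsin(αu+β)` if `ε = −1`. -/
theorem statement7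
    (ε ϑ : ℝ) (hε : ε = -1 ∨ ε = 1) (hϑ : ϑ ≠ 0)
    (I J : Set ℝ)
    (hIopen : IsOpen I) (hIint : I.OrdConnected) (hIne : I.Nonempty)
    (hJopen : IsOpen J) (hJint : J.OrdConnected) (hJne : J.Nonempty)
    (ω q : ℝ → ℝ → ℝ) (g : ℝ → ℝ)
    (hω : Smooth2 ω (I ×ˢ J)) (hq : Smooth2 q (I ×ˢ J))
    (hg : ContDiffOn ℝ (⊤ : ℕ∞) g J)
    (hg0 : ∀ v ∈ J, g v ≠ 0)
    (hg'0 : ∀ v ∈ J, deriv g v ≠ 0)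
    (hGauss : ∀ u ∈ I, ∀ v ∈ J,
      GaussEq 0 ω (fun u v => (q u v + ϑ) / 2) (fun u v => ε * (q u v - ϑ) / 2)
        (fun u v => 1 / g v) u v)
    (hCodazzi : ∀ u ∈ I, ∀ v ∈ J,
      CodazziEq ω (fun u v => (q u v + ϑ) / 2) (fun u v => ε * (q u v - ϑ) / 2)
        (fun u v => 1 / g v) u v) :
    (∀ u ∈ I, ∀ v ∈ J, pd2 (pd1 ω) u v = 0) ∧
    (∀ u ∈ I, ∀ v ∈ J, 0 < ε * ((q u v) ^ 2 - ϑ ^ 2)) ∧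
    (∀ u ∈ I, ∀ v ∈ J, ∀ v' ∈ J, q u v = q u v') ∧
    (∃ C α β : ℝ, C ≠ 0 ∧ α ≠ 0 ∧
      (∀ v ∈ J, g v = C * Real.exp (α * v)) ∧
      (ε = 1 → ∃ μ : ℝ, (μ = -1 ∨ μ = 1) ∧
        ∀ u ∈ I, ∀ v ∈ J, q u v = μ * ϑ * Real.cosh (α * u + β)) ∧
      (ε = -1 → ∀ u ∈ I, ∀ v ∈ J, q u v = ϑ * Real.sin (α * u + β))) :=
  statement7_general ε ϑ hε hϑ I J hIopen hIint hIne hJopen hJint hJne ω q g hq hg hg0 hg'0 hGauss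
    hCodazzi
end
end

section
/- Let I ⊆ ℝ be an open interval with 0 ∉ I, and let a : I → ℝ be a twice continuously differentiable function satisfying the ordinary differential equation x(a″(x) a(x) + a′(x)²) = a(x)² a′(x) for all x ∈ I. Then there exists a constant c₁ ∈ ℝ such that 6 x a(x) a′(x) = 2 a(x)³ + 3 a(x)² + c₁ for all x ∈ I; equivalently, the function x ↦ x a(x) a′(x) − (2a(x)³ + 3a(x)²)/6 is constant on I, so the equation is solved by quadratures: 12 ∫ a/(2a³ + 3a² + c₁) da = 2 log|x| + c₂. -/
/-! Up to the factor 6, the expression `x(a″a + a′²) − a²a′` is the derivative of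
`6xaa′ − (2a³ + 3a²)`, so the equation says that this function has vanishing derivative,
hence is constant on the interval `I`. -/

theorem hasDerivAt_and_hasDerivAt_deriv_of_contDiffOn_two {𝕜 : Type*}
    [NontriviallyNormedField 𝕜] {I : Set 𝕜} (hI : IsOpen I) {a : 𝕜 → 𝕜}
    (ha : ContDiffOn 𝕜 2 a I) {x : 𝕜} (hx : x ∈ I) :
    HasDerivAt a (deriv a x) x ∧ HasDerivAt (deriv a) (deriv (deriv a) x) x := by
  have ha' : ContDiffOn 𝕜 1 (deriv a) I := ha.deriv_of_isOpen hI le_rfl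
  exact ⟨((ha.differentiableOn two_ne_zero x hx).differentiableAt (hI.mem_nhds hx)).hasDerivAt,
    ((ha'.differentiableOn one_ne_zero x hx).differentiableAt (hI.mem_nhds hx)).hasDerivAt⟩

theorem hasDerivAt_first_integral {a b : ℝ → ℝ} {x b' : ℝ} (ha : HasDerivAt a (b x) x)
    (hb : HasDerivAt b b' x) :
    HasDerivAt (fun t => 6 * t * a t * b t - (2 * a t ^ 3 + 3 * a t ^ 2))
      (6 * (x * (b' * a x + b x ^ 2) - a x ^ 2 * b x)) x := by
  have h := ((((hasDerivAt_id x).const_mul 6).mul ha).mul hb).sub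
    (((ha.pow 3).const_mul 2).add ((ha.pow 2).const_mul 3))
  refine h.congr_deriv ?_
  simp only [id, Pi.mul_apply]
  ring

theorem statement12_general
    (I : Set ℝ) (hIopen : IsOpen I) (hIint : I.OrdConnected)
    (a : ℝ → ℝ) (ha : ContDiffOn ℝ 2 a I)
    (hode : ∀ x ∈ I,
      x * (deriv (deriv a) x * a x + (deriv a x) ^ 2) = (a x) ^ 2 * deriv a x) :
    ∃ c₁ : ℝ, ∀ x ∈ I,
      6 * x * a x * deriv a x = 2 * (a x) ^ 3 + 3 * (a x) ^ 2 + c₁ := by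
  have hderiv : ∀ x ∈ I, HasDerivAt
      (fun t => 6 * t * a t * deriv a t - (2 * a t ^ 3 + 3 * a t ^ 2)) 0 x := by
    intro x hx
    obtain ⟨hda, hdda⟩ := hasDerivAt_and_hasDerivAt_deriv_of_contDiffOn_two hIopen ha hx
    simpa [hode x hx] using hasDerivAt_first_integral hda hdda
  obtain ⟨c₁, hc₁⟩ := hIopen.exists_is_const_of_deriv_eq_zero hIint.isPreconnected
    (fun x hx => (hderiv x hx).differentiableAt.differentiableWithinAt)
    (fun x hx => (hderiv x hx).deriv)
  exact ⟨c₁, fun x hx => by linarith [hc₁ x hx]⟩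

/-- Proposition 4.12: the ODE `x(a″a + a′²) = a²a′` for timelike
HIMC surfaces of revolution with null axis admits the first integral
`6xaa′ − (2a³ + 3a²)/... `: there is a constant `c₁` with
`6xaa′ = 2a³ + 3a² + c₁`, so the equation is solved by quadratures. -/
theorem statement12
    (I : Set ℝ) (hIopen : IsOpen I) (hIint : I.OrdConnected) (h0 : (0 : ℝ) ∉ I)
    (a : ℝ → ℝ) (ha : ContDiffOn ℝ 2 a I)
    (hode : ∀ x ∈ I,
      x * (deriv (deriv a) x * a x + (deriv a x) ^ 2) = (a x) ^ 2 * deriv a x) :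
    ∃ c₁ : ℝ, ∀ x ∈ I,
      6 * x * a x * deriv a x = 2 * (a x) ^ 3 + 3 * (a x) ^ 2 + c₁ :=
  statement12_general I hIopen hIint a ha hode
end

section
/- Let c ∈ {−1, 1}, let I, J ⊆ ℝ be open intervals, and let f : I → ℝ, g : J → ℝ be smooth. (a) On the open set of D = I × J where 1 − c f(u) g(v) ≠ 0, the function φ(u,v) = (f(u) + g(v))/(1 − c f(u) g(v)) satisfies 1 + cφ² ≠ 0 ⇒ φ_uv − (2cφ/(1 + cφ²)) φ_u φ_v = 0 (in particular it is a solution wherever 1 + cφ² ≠ 0). (b) On the open set where f(u) + g(v) ≠ 0, the function ψ(u,v) = (1 − c f(u) g(v))/(f(u) + g(v)) likewise satisfies ψ_uv − (2cψ/(1 + cψ²)) ψ_u ψ_v = 0 wherever 1 + cψ² ≠ 0. -/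
/-!
Reparametrizing each null coordinate separately multiplies the left-hand side of the equation
by `f' g'`: if `φ u v = R (f u) (g v)`, then
`φ_uv - k(φ) φ_u φ_v = f'(u) g'(v) (R_xy - k(R) R_x R_y)`.
So it suffices that `R x y = (x + y) / (1 - c x y)` and `R x y = (1 - c x y) / (x + y)` solve the
equation identically in `(x, y)`. This is a rational identity resting on
`(1 - c x y)² + c (x + y)² = (1 + c x²)(1 + c y²)`, and, when `c² = 1`, on
`(x + y)² + c (1 - c x y)² = c (1 + c x²)(1 + c y²)`.
-/

noncomputable section

open Filter Topology

def HarmonicMapEqAt (k : ℝ → ℝ) (φ : ℝ → ℝ → ℝ) (u v : ℝ) : Prop :=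
  pd2 (pd1 φ) u v - k (φ u v) * pd1 φ u v * pd2 φ u v = 0

theorem harmonicMapEqAt_comp {k : ℝ → ℝ} {R : ℝ → ℝ → ℝ} {R₁ f g : ℝ → ℝ}
    {u v f' g' r₂ r₁₂ : ℝ} (hf : HasDerivAt f f' u) (hg : HasDerivAt g g' v)
    (hR₁ : ∀ᶠ y in 𝓝 (g v), HasDerivAt (fun x => R x y) (R₁ y) (f u))
    (hR₂ : HasDerivAt (R (f u)) r₂ (g v)) (hR₁₂ : HasDerivAt R₁ r₁₂ (g v))
    (hR : r₁₂ = k (R (f u) (g v)) * R₁ (g v) * r₂) :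
    HarmonicMapEqAt k (fun u v => R (f u) (g v)) u v := by
  have hpd1 : pd1 (fun u v => R (f u) (g v)) u =ᶠ[𝓝 v] fun w => R₁ (g w) * f' :=
    (hg.continuousAt.eventually hR₁).mono fun w hw => (hw.comp u hf).deriv
  have hpd2 : pd2 (fun u v => R (f u) (g v)) u v = r₂ * g' := (hR₂.comp v hg).deriv
  have hpd21 : pd2 (pd1 fun u v => R (f u) (g v)) u v = r₁₂ * g' * f' := by
    rw [pd2, hpd1.deriv_eq]
    exact ((hR₁₂.comp v hg).mul_const f').deriv
  rw [HarmonicMapEqAt, hpd21, hpd1.eq_of_nhds, hpd2, hR]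
  ring

/-- For `c = 1` (resp. `c = -1`) this is the addition law of `tan` (resp. `tanh`):
`tan (a + b) = tanAdd 1 (tan a) (tan b)`. -/
def tanAdd (c x y : ℝ) : ℝ := (x + y) / (1 - c * x * y)

/-- The addition law of `cot` (resp. `coth`). -/
def cotAdd (c x y : ℝ) : ℝ := (1 - c * x * y) / (x + y)

section

variable {c x y : ℝ}

theorem eventually_hasDerivAt_tanAdd_left (h : 1 - c * x * y ≠ 0) :
    ∀ᶠ y' in 𝓝 y,
      HasDerivAt (fun x' => tanAdd c x' y') ((1 + c * y' ^ 2) / (1 - c * x * y') ^ 2) x := by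
  have hD : ∀ᶠ y' in 𝓝 y, 1 - c * x * y' ≠ 0 :=
    (by fun_prop : Continuous fun y' => 1 - c * x * y').continuousAt.eventually_ne h
  refine hD.mono fun y' hy' => ?_
  refine (((hasDerivAt_id' x).add_const y').fun_div
    (((hasDerivAt_id' x).const_mul c).mul_const y' |>.const_sub 1) hy').congr_deriv ?_
  ring

theorem hasDerivAt_tanAdd_right (h : 1 - c * x * y ≠ 0) :
    HasDerivAt (tanAdd c x) ((1 + c * x ^ 2) / (1 - c * x * y) ^ 2) y := by
  refine (((hasDerivAt_id' y).const_add x).fun_div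
    ((hasDerivAt_id' y).const_mul (c * x) |>.const_sub 1) h).congr_deriv ?_
  ring

theorem hasDerivAt_tanAdd_mixed (h : 1 - c * x * y ≠ 0) :
    HasDerivAt (fun y => (1 + c * y ^ 2) / (1 - c * x * y) ^ 2)
      (2 * c * (x + y) / (1 - c * x * y) ^ 3) y := by
  refine ((((hasDerivAt_pow 2 y).const_mul c).const_add 1).fun_div
    (((hasDerivAt_id' y).const_mul (c * x) |>.const_sub 1).fun_pow 2)
    (pow_ne_zero 2 h)).congr_deriv ?_
  field_simp
  ring

theorem one_add_mul_tanAdd_sq (h : 1 - c * x * y ≠ 0) :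
    1 + c * tanAdd c x y ^ 2 = (1 + c * x ^ 2) * (1 + c * y ^ 2) / (1 - c * x * y) ^ 2 := by
  rw [tanAdd]; field_simp; ring

theorem tanAdd_mixed_eq (h : 1 - c * x * y ≠ 0) (hP : 1 + c * tanAdd c x y ^ 2 ≠ 0) :
    2 * c * (x + y) / (1 - c * x * y) ^ 3 = 2 * c * tanAdd c x y / (1 + c * tanAdd c x y ^ 2)
      * ((1 + c * y ^ 2) / (1 - c * x * y) ^ 2) * ((1 + c * x ^ 2) / (1 - c * x * y) ^ 2) := by
  rw [one_add_mul_tanAdd_sq h] at hP ⊢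
  have hx : 1 + c * x ^ 2 ≠ 0 := by contrapose! hP; simp [hP]
  have hy : 1 + c * y ^ 2 ≠ 0 := by contrapose! hP; simp [hP]
  rw [tanAdd]; field_simp

theorem eventually_hasDerivAt_cotAdd_left (h : x + y ≠ 0) :
    ∀ᶠ y' in 𝓝 y,
      HasDerivAt (fun x' => cotAdd c x' y') (-(1 + c * y' ^ 2) / (x + y') ^ 2) x := by
  have hD : ∀ᶠ y' in 𝓝 y, x + y' ≠ 0 :=
    (by fun_prop : Continuous fun y' => x + y').continuousAt.eventually_ne h
  refine hD.mono fun y' hy' => ?_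
  refine ((((hasDerivAt_id' x).const_mul c).mul_const y' |>.const_sub 1).fun_div
    ((hasDerivAt_id' x).add_const y') hy').congr_deriv ?_
  ring

theorem hasDerivAt_cotAdd_right (h : x + y ≠ 0) :
    HasDerivAt (cotAdd c x) (-(1 + c * x ^ 2) / (x + y) ^ 2) y := by
  refine (((hasDerivAt_id' y).const_mul (c * x) |>.const_sub 1).fun_div
    ((hasDerivAt_id' y).const_add x) h).congr_deriv ?_
  ring

theorem hasDerivAt_cotAdd_mixed (h : x + y ≠ 0) :
    HasDerivAt (fun y => -(1 + c * y ^ 2) / (x + y) ^ 2) (2 * (1 - c * x * y) / (x + y) ^ 3) y := by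
  refine ((((hasDerivAt_pow 2 y).const_mul c).const_add 1).fun_neg.fun_div
    (((hasDerivAt_id' y).const_add x).fun_pow 2) (pow_ne_zero 2 h)).congr_deriv ?_
  field_simp
  ring

theorem one_add_mul_cotAdd_sq (hc : c ^ 2 = 1) (h : x + y ≠ 0) :
    1 + c * cotAdd c x y ^ 2 = c * ((1 + c * x ^ 2) * (1 + c * y ^ 2)) / (x + y) ^ 2 := by
  rw [cotAdd]; field_simp; linear_combination -(x + y) ^ 2 * hc

theorem cotAdd_mixed_eq (hc : c ^ 2 = 1) (h : x + y ≠ 0) (hP : 1 + c * cotAdd c x y ^ 2 ≠ 0) :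
    2 * (1 - c * x * y) / (x + y) ^ 3 = 2 * c * cotAdd c x y / (1 + c * cotAdd c x y ^ 2)
      * (-(1 + c * y ^ 2) / (x + y) ^ 2) * (-(1 + c * x ^ 2) / (x + y) ^ 2) := by
  rw [one_add_mul_cotAdd_sq hc h] at hP ⊢
  have hc0 : c ≠ 0 := by contrapose! hP; simp [hP]
  have hx : 1 + c * x ^ 2 ≠ 0 := by contrapose! hP; simp [hP]
  have hy : 1 + c * y ^ 2 ≠ 0 := by contrapose! hP; simp [hP]
  rw [cotAdd]; field_simp

end

section

variable {c u v f' g' : ℝ} {f g : ℝ → ℝ}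

theorem harmonicMapEqAt_tanAdd_comp (hf : HasDerivAt f f' u) (hg : HasDerivAt g g' v)
    (h : 1 - c * f u * g v ≠ 0) (hP : 1 + c * tanAdd c (f u) (g v) ^ 2 ≠ 0) :
    HarmonicMapEqAt (fun t => 2 * c * t / (1 + c * t ^ 2)) (fun u v => tanAdd c (f u) (g v)) u v :=
  harmonicMapEqAt_comp hf hg (eventually_hasDerivAt_tanAdd_left h) (hasDerivAt_tanAdd_right h)
    (hasDerivAt_tanAdd_mixed h) (tanAdd_mixed_eq h hP)

theorem harmonicMapEqAt_cotAdd_comp (hc : c ^ 2 = 1) (hf : HasDerivAt f f' u)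
    (hg : HasDerivAt g g' v) (h : f u + g v ≠ 0) (hP : 1 + c * cotAdd c (f u) (g v) ^ 2 ≠ 0) :
    HarmonicMapEqAt (fun t => 2 * c * t / (1 + c * t ^ 2)) (fun u v => cotAdd c (f u) (g v)) u v :=
  harmonicMapEqAt_comp hf hg (eventually_hasDerivAt_cotAdd_left h) (hasDerivAt_cotAdd_right h)
    (hasDerivAt_cotAdd_mixed h) (cotAdd_mixed_eq hc h hP)

end

theorem statement14_general
    (c : ℝ) (hc : c = -1 ∨ c = 1)
    (I J : Set ℝ)
    (hIopen : IsOpen I)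
    (hJopen : IsOpen J)
    (f g : ℝ → ℝ)
    (hf : ContDiffOn ℝ (⊤ : ℕ∞) f I) (hg : ContDiffOn ℝ (⊤ : ℕ∞) g J)
    (φ ψ : ℝ → ℝ → ℝ)
    (hφ : ∀ u v, φ u v = (f u + g v) / (1 - c * f u * g v))
    (hψ : ∀ u v, ψ u v = (1 - c * f u * g v) / (f u + g v)) :
    (∀ u ∈ I, ∀ v ∈ J, 1 - c * f u * g v ≠ 0 → 1 + c * (φ u v) ^ 2 ≠ 0 →
      pd2 (pd1 φ) u v
        - (2 * c * φ u v / (1 + c * (φ u v) ^ 2)) * pd1 φ u v * pd2 φ u v = 0) ∧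
    (∀ u ∈ I, ∀ v ∈ J, f u + g v ≠ 0 → 1 + c * (ψ u v) ^ 2 ≠ 0 →
      pd2 (pd1 ψ) u v
        - (2 * c * ψ u v / (1 + c * (ψ u v) ^ 2)) * pd1 ψ u v * pd2 ψ u v = 0) := by
  have hc2 : c ^ 2 = 1 := by rcases hc with rfl | rfl <;> norm_num
  have hf' : ∀ u ∈ I, HasDerivAt f (deriv f u) u := fun u hu =>
    ((hf.differentiableOn (by simp)).differentiableAt (hIopen.mem_nhds hu)).hasDerivAt
  have hg' : ∀ v ∈ J, HasDerivAt g (deriv g v) v := fun v hv =>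
    ((hg.differentiableOn (by simp)).differentiableAt (hJopen.mem_nhds hv)).hasDerivAt
  obtain rfl : φ = fun u v => tanAdd c (f u) (g v) := funext₂ hφ
  obtain rfl : ψ = fun u v => cotAdd c (f u) (g v) := funext₂ hψ
  exact ⟨fun u hu v hv => harmonicMapEqAt_tanAdd_comp (hf' u hu) (hg' v hv),
    fun u hu v hv => harmonicMapEqAt_cotAdd_comp hc2 (hf' u hu) (hg' v hv)⟩

/-- Proposition 6.2, verification half of the nonlinear d'Alembert
formula: for `c = ±1`, both `φ = (f + g)/(1 − cfg)` and `ψ = (1 − cfg)/(f + g)` solve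
the harmonic map equation `φ_uv − (2cφ/(1 + cφ²))φ_uφ_v = 0` wherever they are defined
and `1 + cφ² ≠ 0`. -/
theorem statement14
    (c : ℝ) (hc : c = -1 ∨ c = 1)
    (I J : Set ℝ)
    (hIopen : IsOpen I) (hIint : I.OrdConnected)
    (hJopen : IsOpen J) (hJint : J.OrdConnected)
    (f g : ℝ → ℝ)
    (hf : ContDiffOn ℝ (⊤ : ℕ∞) f I) (hg : ContDiffOn ℝ (⊤ : ℕ∞) g J)
    (φ ψ : ℝ → ℝ → ℝ)
    (hφ : ∀ u v, φ u v = (f u + g v) / (1 - c * f u * g v))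
    (hψ : ∀ u v, ψ u v = (1 - c * f u * g v) / (f u + g v)) :
    (∀ u ∈ I, ∀ v ∈ J, 1 - c * f u * g v ≠ 0 → 1 + c * (φ u v) ^ 2 ≠ 0 →
      pd2 (pd1 φ) u v
        - (2 * c * φ u v / (1 + c * (φ u v) ^ 2)) * pd1 φ u v * pd2 φ u v = 0) ∧
    (∀ u ∈ I, ∀ v ∈ J, f u + g v ≠ 0 → 1 + c * (ψ u v) ^ 2 ≠ 0 →
      pd2 (pd1 ψ) u v
        - (2 * c * ψ u v / (1 + c * (ψ u v) ^ 2)) * pd1 ψ u v * pd2 ψ u v = 0) :=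
  statement14_general c hc I J hIopen hJopen f g hf hg φ ψ hφ hψ
end
end

section
/- Let I, J ⊆ ℝ be open intervals, D = I × J, and let H, λ : D → ℝ be smooth such that H is nowhere zero and λ(u,v) ∉ {0, 1} for all (u,v) ∈ D. Suppose that ∂_v(H(1 − λ)) = 0 and ∂_u(H(1 − λ^{−1})) = 0 on D. Then there exist smooth functions f : I → ℝ and g : J → ℝ with f nowhere zero and f(u) + g(v) nowhere zero on D, such that H(u,v) = 1/(f(u) + g(v)) and λ(u,v) = −g(v)/f(u) for all (u,v) ∈ D. -/
noncomputable section

/-! `A = H(1 − λ)` is independent of `v` and `B = H(1 − λ⁻¹)` of `u`, so `f = 1/A` and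
`g = 1/B` are functions of one variable each; the identity `1/A + 1/B = 1/H`, valid whenever
`λ ∉ {0, 1}`, then gives `H = 1/(f + g)`, and `B/A = −λ⁻¹` gives `λ = −g/f`. -/

namespace Smooth2

variable {F : ℝ → ℝ → ℝ} {s t : Set ℝ}

theorem contDiffOn_left_s16 (hF : Smooth2 F (s ×ˢ t)) {v : ℝ} (hv : v ∈ t) :
    ContDiffOn ℝ (⊤ : ℕ∞) (fun u => F u v) s :=
  hF.comp (contDiffOn_id.prodMk contDiffOn_const) fun _ hu => ⟨hu, hv⟩

theorem contDiffOn_right_s16 (hF : Smooth2 F (s ×ˢ t)) {u : ℝ} (hu : u ∈ s) :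
    ContDiffOn ℝ (⊤ : ℕ∞) (fun v => F u v) t :=
  hF.comp (contDiffOn_const.prodMk contDiffOn_id) fun _ hv => ⟨hu, hv⟩

theorem eq_of_pd1_eq_zero (hF : Smooth2 F (s ×ˢ t)) (hs : IsOpen s) (hs' : s.OrdConnected)
    (h : ∀ u ∈ s, ∀ v ∈ t, pd1 F u v = 0) {u u' v : ℝ} (hu : u ∈ s) (hu' : u' ∈ s)
    (hv : v ∈ t) : F u v = F u' v :=
  hs.is_const_of_deriv_eq_zero hs'.isPreconnected
    ((hF.contDiffOn_left_s16 hv).differentiableOn (by simp)) (fun x hx => h x hx v hv) hu hu'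

theorem eq_of_pd2_eq_zero_s16 (hF : Smooth2 F (s ×ˢ t)) (ht : IsOpen t) (ht' : t.OrdConnected)
    (h : ∀ u ∈ s, ∀ v ∈ t, pd2 F u v = 0) {u v v' : ℝ} (hu : u ∈ s) (hv : v ∈ t)
    (hv' : v' ∈ t) : F u v = F u v' :=
  ht.is_const_of_deriv_eq_zero ht'.isPreconnected
    ((hF.contDiffOn_right_s16 hu).differentiableOn (by simp)) (fun y hy => h u hu y hy) hv hv'

end Smooth2

theorem inv_mul_one_sub_add_inv_mul_one_sub_inv {h l : ℝ} (hl0 : l ≠ 0) (hl1 : l ≠ 1) :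
    (h * (1 - l))⁻¹ + (h * (1 - l⁻¹))⁻¹ = h⁻¹ := by
  have : 1 - l ≠ 0 := sub_ne_zero.mpr hl1.symm
  rcases eq_or_ne h 0 with rfl | hh
  · simp
  field_simp
  ring

theorem neg_inv_mul_one_sub_inv_div_inv_mul_one_sub {h l : ℝ} (hh : h ≠ 0) (hl0 : l ≠ 0)
    (hl1 : l ≠ 1) : -(h * (1 - l⁻¹))⁻¹ / (h * (1 - l))⁻¹ = l := by
  have : 1 - l ≠ 0 := sub_ne_zero.mpr hl1.symm
  have : l - 1 ≠ 0 := sub_ne_zero.mpr hl1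
  field_simp
  ring

/-- equations (3.6)–(3.7): the compatibility conditions
`∂_v(H(1 − λ)) = 0` and `∂_u(H(1 − λ⁻¹)) = 0` for the variable spectral parameter force
`H = 1/(f(u) + g(v))` and `λ = −g(v)/f(u)`. -/
theorem statement16
    (I J : Set ℝ)
    (hIopen : IsOpen I) (hIint : I.OrdConnected)
    (hJopen : IsOpen J) (hJint : J.OrdConnected)
    (H lam : ℝ → ℝ → ℝ)
    (hH : Smooth2 H (I ×ˢ J)) (hlam : Smooth2 lam (I ×ˢ J))
    (hH0 : ∀ u ∈ I, ∀ v ∈ J, H u v ≠ 0)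
    (hlam0 : ∀ u ∈ I, ∀ v ∈ J, lam u v ≠ 0)
    (hlam1 : ∀ u ∈ I, ∀ v ∈ J, lam u v ≠ 1)
    (hcomp1 : ∀ u ∈ I, ∀ v ∈ J,
      pd2 (fun u v => H u v * (1 - lam u v)) u v = 0)
    (hcomp2 : ∀ u ∈ I, ∀ v ∈ J,
      pd1 (fun u v => H u v * (1 - (lam u v)⁻¹)) u v = 0) :
    ∃ f g : ℝ → ℝ, ContDiffOn ℝ (⊤ : ℕ∞) f I ∧ ContDiffOn ℝ (⊤ : ℕ∞) g J ∧
      (∀ u ∈ I, f u ≠ 0) ∧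
      (∀ u ∈ I, ∀ v ∈ J,
        f u + g v ≠ 0 ∧ H u v = 1 / (f u + g v) ∧ lam u v = -(g v) / f u) := by
  by_cases hne : I.Nonempty ∧ J.Nonempty
  swap
  · exact ⟨fun _ => 1, fun _ => 0, contDiffOn_const, contDiffOn_const, fun _ _ => one_ne_zero,
      fun u hu v hv => absurd ⟨⟨u, hu⟩, ⟨v, hv⟩⟩ hne⟩
  obtain ⟨⟨u₀, hu₀⟩, ⟨v₀, hv₀⟩⟩ := hne
  set A := fun u v => H u v * (1 - lam u v)
  set B := fun u v => H u v * (1 - (lam u v)⁻¹)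
  have hA : Smooth2 A (I ×ˢ J) := hH.mul (contDiffOn_const.sub hlam)
  have hB : Smooth2 B (I ×ˢ J) :=
    hH.mul (contDiffOn_const.sub (hlam.inv fun p hp => hlam0 p.1 hp.1 p.2 hp.2))
  have hA0 : ∀ u ∈ I, A u v₀ ≠ 0 := fun u hu =>
    mul_ne_zero (hH0 u hu v₀ hv₀) (sub_ne_zero.mpr (hlam1 u hu v₀ hv₀).symm)
  have hB0 : ∀ v ∈ J, B u₀ v ≠ 0 := fun v hv => mul_ne_zero (hH0 u₀ hu₀ v hv)
    (sub_ne_zero.mpr fun h => hlam1 u₀ hu₀ v hv (inv_eq_one.mp h.symm))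
  refine ⟨fun u => (A u v₀)⁻¹, fun v => (B u₀ v)⁻¹, (hA.contDiffOn_left_s16 hv₀).inv hA0,
    (hB.contDiffOn_right_s16 hu₀).inv hB0, fun u hu => inv_ne_zero (hA0 u hu), fun u hu v hv => ?_⟩
  beta_reduce
  rw [← hA.eq_of_pd2_eq_zero_s16 hJopen hJint hcomp1 hu hv hv₀,
    ← hB.eq_of_pd1_eq_zero hIopen hIint hcomp2 hu hu₀ hv,
    inv_mul_one_sub_add_inv_mul_one_sub_inv (hlam0 u hu v hv) (hlam1 u hu v hv)]
  exact ⟨inv_ne_zero (hH0 u hu v hv), (inv_inv _).symm.trans (one_div _).symm,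
    (neg_inv_mul_one_sub_inv_div_inv_mul_one_sub (hH0 u hu v hv) (hlam0 u hu v hv)
      (hlam1 u hu v hv)).symm⟩
end
end
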